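/- arXiv:2602.15683 — 7 statements merged into one kernel-verified Lean document; each statement's English description precedes it below -/
import Mathlib

section
/- Let P be a clustering of a finite simple graph G containing a cluster Z, let Z1 and Z2 be nonempty disjoint sets with Z1 ∪ Z2 = Z, and let P' be the clustering obtained from P by replacing the cluster Z with the two clusters Z1 and Z2. Let e(Z1,Z2) denote the number of edges of G with one endpoint in Z1 and one endpoint in Z2, so that |Z1|·|Z2| − e(Z1,Z2) is the number of non-adjacent pairs between Z1 and Z2. Then cost(P') + (|Z1|·|Z2| − e(Z1,Z2)) = cost(P) + e(Z1,Z2). -/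
open Finset

open scoped Classical

noncomputable section

variable {V : Type*}

/-- Two vertices lie in the same cluster of the clustering `P`. -/
def sameCluster [Fintype V] (P : Finpartition (Finset.univ : Finset V)) (v w : V) : Prop :=
  ∃ t ∈ P.parts, v ∈ t ∧ w ∈ t

/-- The cost of a clustering of the vertex set of `G`: the number of edges of `G` with
endpoints in different clusters plus the number of non-adjacent (unordered) pairs of distinct
vertices lying in the same cluster. (Ordered pairs are counted and divided by two.) -/
def clusterCost [Fintype V] (G : SimpleGraph V)
    (P : Finpartition (Finset.univ : Finset V)) : ℕ :=
  (Finset.univ.offDiag.filter fun p : V × V => G.Adj p.1 p.2 ∧ ¬ sameCluster P p.1 p.2).card / 2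
    + (Finset.univ.offDiag.filter fun p : V × V =>
        ¬ G.Adj p.1 p.2 ∧ sameCluster P p.1 p.2).card / 2

/-- The number of edges of `G` with one endpoint in `A` and the other in `B`
(for disjoint `A`, `B` this is the usual count of edges between `A` and `B`). -/
def edgesBetween (G : SimpleGraph V) (A B : Finset V) : ℕ :=
  ((A ×ˢ B).filter fun p : V × V => G.Adj p.1 p.2).card

set_option maxHeartbeats 1000000 in
/-- Splitting a cluster `Z` of a clustering `P` into two nonempty parts
`Z1` and `Z2` yields a clustering `P'` with
`cost(P') + (|Z1|·|Z2| − e(Z1,Z2)) = cost(P) + e(Z1,Z2)`. -/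
theorem cost_split_cluster {V : Type*} [Fintype V] (G : SimpleGraph V)
    (P P' : Finpartition (Finset.univ : Finset V)) (Z Z1 Z2 : Finset V)
    (hZ : Z ∈ P.parts) (h1 : Z1.Nonempty) (h2 : Z2.Nonempty)
    (hdisj : Disjoint Z1 Z2) (hunion : Z1 ∪ Z2 = Z)
    (hP' : P'.parts = insert Z1 (insert Z2 (P.parts.erase Z))) :
    clusterCost G P' + (Z1.card * Z2.card - edgesBetween G Z1 Z2)
      = clusterCost G P + edgesBetween G Z1 Z2 := by
  classical
  have hZ1Z : Z1 ⊆ Z := hunion ▸ Finset.subset_union_left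
  have hZ2Z : Z2 ⊆ Z := hunion ▸ Finset.subset_union_right
  have hd1 : ∀ v, v ∈ Z1 → v ∉ Z2 := fun v hv => Finset.disjoint_left.mp hdisj hv
  -- characterization of sameCluster P'
  have same_iff : ∀ v w : V, sameCluster P' v w ↔
      sameCluster P v w ∧ ¬((v ∈ Z1 ∧ w ∈ Z2) ∨ (v ∈ Z2 ∧ w ∈ Z1)) := by
    intro v w
    constructor
    · rintro ⟨t, ht, hv, hw⟩
      rw [hP'] at ht
      simp only [Finset.mem_insert, Finset.mem_erase] at ht
      rcases ht with rfl | rfl | ⟨htZ, ht⟩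
      · exact ⟨⟨Z, hZ, hZ1Z hv, hZ1Z hw⟩, by
          rintro (⟨h1', h2'⟩ | ⟨h1', h2'⟩)
          · exact hd1 w hw h2'
          · exact hd1 v hv h1'⟩
      · exact ⟨⟨Z, hZ, hZ2Z hv, hZ2Z hw⟩, by
          rintro (⟨h1', h2'⟩ | ⟨h1', h2'⟩)
          · exact hd1 v h1' hv
          · exact hd1 w h2' hw⟩
      · refine ⟨⟨t, ht, hv, hw⟩, ?_⟩
        have hdt : Disjoint t Z := P.disjoint ht hZ htZ
        rintro (⟨h1', _⟩ | ⟨h1', _⟩)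
        · exact Finset.disjoint_left.mp hdt hv (hZ1Z h1')
        · exact Finset.disjoint_left.mp hdt hv (hZ2Z h1')
    · rintro ⟨⟨t, ht, hv, hw⟩, hns⟩
      by_cases htZ : t = Z
      · subst htZ
        rw [← hunion] at hv hw
        rcases Finset.mem_union.mp hv with hv1 | hv2
        · have hw1 : w ∈ Z1 := by
            rcases Finset.mem_union.mp hw with hw1 | hw2
            · exact hw1
            · exact absurd (Or.inl ⟨hv1, hw2⟩) hns
          exact ⟨Z1, by rw [hP']; exact Finset.mem_insert_self _ _, hv1, hw1⟩
        · have hw2 : w ∈ Z2 := by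
            rcases Finset.mem_union.mp hw with hw1 | hw2
            · exact absurd (Or.inr ⟨hv2, hw1⟩) hns
            · exact hw2
          exact ⟨Z2, by rw [hP']; exact Finset.mem_insert_of_mem (Finset.mem_insert_self _ _),
            hv2, hw2⟩
      · exact ⟨t, by rw [hP']; exact Finset.mem_insert_of_mem (Finset.mem_insert_of_mem
          (Finset.mem_erase.mpr ⟨htZ, ht⟩)), hv, hw⟩
  have split_same : ∀ v w : V, ((v ∈ Z1 ∧ w ∈ Z2) ∨ (v ∈ Z2 ∧ w ∈ Z1)) → sameCluster P v w := by
    rintro v w (⟨hv, hw⟩ | ⟨hv, hw⟩)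
    · exact ⟨Z, hZ, hZ1Z hv, hZ2Z hw⟩
    · exact ⟨Z, hZ, hZ2Z hv, hZ1Z hw⟩
  -- filter over offDiag of pairs in A ×ˢ B equals filter over A ×ˢ B, for disjoint A B
  have key : ∀ (q : V × V → Prop) (A B : Finset V), Disjoint A B →
      (Finset.univ.offDiag.filter fun p : V × V => q p ∧ (p.1 ∈ A ∧ p.2 ∈ B))
        = (A ×ˢ B).filter fun p => q p := by
    intro q A B hAB
    ext p
    simp only [Finset.mem_filter, Finset.mem_offDiag, Finset.mem_product, Finset.mem_univ,
      true_and]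
    constructor
    · rintro ⟨_, hq, hA, hB⟩
      exact ⟨⟨hA, hB⟩, hq⟩
    · rintro ⟨⟨hA, hB⟩, hq⟩
      exact ⟨fun h => Finset.disjoint_left.mp hAB hA (h ▸ hB), hq, hA, hB⟩
  have comm : edgesBetween G Z2 Z1 = edgesBetween G Z1 Z2 := by
    unfold edgesBetween
    rw [show ((Z2 ×ˢ Z1).filter fun p : V × V => G.Adj p.1 p.2)
        = ((Z1 ×ˢ Z2).filter fun p : V × V => G.Adj p.1 p.2).image Prod.swap from ?_]
    · exact Finset.card_image_of_injective _ Prod.swap_injective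
    · ext p
      simp only [Finset.mem_image, Finset.mem_filter, Finset.mem_product]
      constructor
      · rintro ⟨⟨h2, h1⟩, hadj⟩
        exact ⟨p.swap, ⟨⟨h1, h2⟩, hadj.symm⟩, Prod.swap_swap p⟩
      · rintro ⟨q, ⟨⟨h1, h2⟩, hadj⟩, rfl⟩
        exact ⟨⟨h2, h1⟩, hadj.symm⟩
  -- counting split pairs
  have count : ∀ q : V × V → Prop,
      (Finset.univ.offDiag.filter fun p : V × V => q p ∧
        ((p.1 ∈ Z1 ∧ p.2 ∈ Z2) ∨ (p.1 ∈ Z2 ∧ p.2 ∈ Z1))).card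
      = ((Z1 ×ˢ Z2).filter fun p => q p).card + ((Z2 ×ˢ Z1).filter fun p => q p).card := by
    intro q
    have : (Finset.univ.offDiag.filter fun p : V × V => q p ∧
        ((p.1 ∈ Z1 ∧ p.2 ∈ Z2) ∨ (p.1 ∈ Z2 ∧ p.2 ∈ Z1)))
      = (Finset.univ.offDiag.filter fun p : V × V => q p ∧ (p.1 ∈ Z1 ∧ p.2 ∈ Z2))
        ∪ (Finset.univ.offDiag.filter fun p : V × V => q p ∧ (p.1 ∈ Z2 ∧ p.2 ∈ Z1)) := by
      ext p
      simp only [Finset.mem_union, Finset.mem_filter]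
      tauto
    rw [this, Finset.card_union_of_disjoint, key q Z1 Z2 hdisj, key q Z2 Z1 hdisj.symm]
    rw [Finset.disjoint_left]
    rintro p hp hq
    simp only [Finset.mem_filter] at hp hq
    exact hd1 p.1 hp.2.2.1 hq.2.2.1
  set e := edgesBetween G Z1 Z2 with he
  have hele : e ≤ Z1.card * Z2.card := by
    rw [he]
    unfold edgesBetween
    calc ((Z1 ×ˢ Z2).filter fun p : V × V => G.Adj p.1 p.2).card
        ≤ (Z1 ×ˢ Z2).card := Finset.card_filter_le _ _
      _ = Z1.card * Z2.card := Finset.card_product _ _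
  have hnonadj : ∀ (A B : Finset V), ((A ×ˢ B).filter fun p : V × V => ¬ G.Adj p.1 p.2).card
      = A.card * B.card - edgesBetween G A B := by
    intro A B
    have := Finset.card_filter_add_card_filter_not
      (s := A ×ˢ B) (p := fun p : V × V => G.Adj p.1 p.2)
    rw [Finset.card_product] at this
    unfold edgesBetween
    omega
  -- adjacency counts
  have hA : (Finset.univ.offDiag.filter fun p : V × V =>
      G.Adj p.1 p.2 ∧ ¬ sameCluster P' p.1 p.2).card
      = (Finset.univ.offDiag.filter fun p : V × V =>
          G.Adj p.1 p.2 ∧ ¬ sameCluster P p.1 p.2).card + 2 * e := by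
    have hsplit : (Finset.univ.offDiag.filter fun p : V × V => G.Adj p.1 p.2 ∧
        ((p.1 ∈ Z1 ∧ p.2 ∈ Z2) ∨ (p.1 ∈ Z2 ∧ p.2 ∈ Z1))).card = 2 * e := by
      rw [count (fun p : V × V => G.Adj p.1 p.2)]
      have hc2 : ((Z2 ×ˢ Z1).filter fun p : V × V => G.Adj p.1 p.2).card = e := comm
      have hc1 : ((Z1 ×ˢ Z2).filter fun p : V × V => G.Adj p.1 p.2).card = e := he.symm
      omega
    have heq : (Finset.univ.offDiag.filter fun p : V × V =>
        G.Adj p.1 p.2 ∧ ¬ sameCluster P' p.1 p.2)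
        = (Finset.univ.offDiag.filter fun p : V × V =>
            G.Adj p.1 p.2 ∧ ¬ sameCluster P p.1 p.2)
          ∪ (Finset.univ.offDiag.filter fun p : V × V => G.Adj p.1 p.2 ∧
            ((p.1 ∈ Z1 ∧ p.2 ∈ Z2) ∨ (p.1 ∈ Z2 ∧ p.2 ∈ Z1))) := by
      ext p
      simp only [Finset.mem_union, Finset.mem_filter, same_iff p.1 p.2]
      have := split_same p.1 p.2
      tauto
    rw [heq, Finset.card_union_of_disjoint, hsplit]
    rw [Finset.disjoint_left]
    rintro p hp hq
    simp only [Finset.mem_filter] at hp hq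
    exact hp.2.2 (split_same p.1 p.2 hq.2.2)
  -- non-adjacency counts
  have hB : (Finset.univ.offDiag.filter fun p : V × V =>
      ¬ G.Adj p.1 p.2 ∧ sameCluster P p.1 p.2).card
      = (Finset.univ.offDiag.filter fun p : V × V =>
          ¬ G.Adj p.1 p.2 ∧ sameCluster P' p.1 p.2).card + 2 * (Z1.card * Z2.card - e) := by
    have hsplit : (Finset.univ.offDiag.filter fun p : V × V => ¬ G.Adj p.1 p.2 ∧
        ((p.1 ∈ Z1 ∧ p.2 ∈ Z2) ∨ (p.1 ∈ Z2 ∧ p.2 ∈ Z1))).card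
        = 2 * (Z1.card * Z2.card - e) := by
      have hc : (Finset.univ.offDiag.filter fun p : V × V => ¬ G.Adj p.1 p.2 ∧
          ((p.1 ∈ Z1 ∧ p.2 ∈ Z2) ∨ (p.1 ∈ Z2 ∧ p.2 ∈ Z1))).card
          = ((Z1 ×ˢ Z2).filter fun p : V × V => ¬ G.Adj p.1 p.2).card
            + ((Z2 ×ˢ Z1).filter fun p : V × V => ¬ G.Adj p.1 p.2).card := by
        convert count (fun p : V × V => ¬ G.Adj p.1 p.2) using 3 <;>
          (ext p; simp only [Finset.mem_filter])
      rw [hc, hnonadj Z1 Z2, hnonadj Z2 Z1, comm, Nat.mul_comm Z2.card Z1.card, ← he]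
      omega
    have heq : (Finset.univ.offDiag.filter fun p : V × V =>
        ¬ G.Adj p.1 p.2 ∧ sameCluster P p.1 p.2)
        = (Finset.univ.offDiag.filter fun p : V × V =>
            ¬ G.Adj p.1 p.2 ∧ sameCluster P' p.1 p.2)
          ∪ (Finset.univ.offDiag.filter fun p : V × V => ¬ G.Adj p.1 p.2 ∧
            ((p.1 ∈ Z1 ∧ p.2 ∈ Z2) ∨ (p.1 ∈ Z2 ∧ p.2 ∈ Z1))) := by
      ext p
      simp only [Finset.mem_union, Finset.mem_filter, same_iff p.1 p.2]
      have := split_same p.1 p.2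
      tauto
    rw [heq, Finset.card_union_of_disjoint, hsplit]
    rw [Finset.disjoint_left]
    rintro p hp hq
    simp only [Finset.mem_filter, same_iff p.1 p.2] at hp hq
    exact hp.2.2.2 hq.2.2
  unfold clusterCost
  rw [hA, hB]
  omega


end
end

section
/- Let M be a vertex cover of a finite simple graph G with colored vertices, and let P be a fair clustering of G whose cost is minimum among all fair clusterings of G. Then every cluster C of P satisfying C ∩ M = ∅ has size exactly c̃ (the fairlet size). -/
open Finset

open scoped Classical

noncomputable section

variable {V : Type*}

/-- A finite vertex set `W` is fair w.r.t. the coloring `χ` and the fairlet vector `c`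
if for some `d : ℕ` it contains exactly `d * c i` vertices of each color `i`. -/
def IsFair {κ : ℕ} (χ : V → Fin κ) (c : Fin κ → ℕ) (W : Finset V) : Prop :=
  ∃ d : ℕ, ∀ i : Fin κ, (W.filter fun v => χ v = i).card = d * c i

/-- A clustering is fair if each of its clusters is fair. -/
def IsFairClustering [Fintype V] {κ : ℕ} (χ : V → Fin κ) (c : Fin κ → ℕ)
    (P : Finpartition (Finset.univ : Finset V)) : Prop :=
  ∀ t ∈ P.parts, IsFair χ c t


/-- Equiv between a finset (as subtype) and `Fin` of its card. -/
noncomputable def finsetEquivFin {V : Type*} (s : Finset V) : {x // x ∈ s} ≃ Fin s.card :=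
  Fintype.equivFinOfCardEq (Fintype.card_coe s)

/-- Index of a vertex within its color class of `C`, divided by the fairlet count of its color. -/
noncomputable def gIdx {V : Type*} {κ : ℕ} (χ : V → Fin κ) (c : Fin κ → ℕ) (C : Finset V)
    (v : V) : ℕ :=
  if h : v ∈ C.filter (fun w => χ w = χ v) then
    ((finsetEquivFin (C.filter (fun w => χ w = χ v)) ⟨v, h⟩ : Fin _) : ℕ) / c (χ v)
  else 0

lemma gIdx_eq {V : Type*} {κ : ℕ} (χ : V → Fin κ) (c : Fin κ → ℕ) (C : Finset V)
    {v : V} {i : Fin κ} (hv : v ∈ C) (hvi : χ v = i) :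
    gIdx χ c C v =
      ((finsetEquivFin (C.filter (fun w => χ w = i))
        ⟨v, mem_filter.2 ⟨hv, hvi⟩⟩ : Fin _) : ℕ) / c i := by
  subst hvi
  rw [gIdx, dif_pos]

lemma gIdx_lt {V : Type*} {κ : ℕ} (χ : V → Fin κ) (c : Fin κ → ℕ) (C : Finset V) (d : ℕ)
    (hd : ∀ i, (C.filter fun v => χ v = i).card = d * c i) {v : V} (hv : v ∈ C) :
    gIdx χ c C v < d := by
  set E := C.filter (fun w => χ w = χ v) with hE
  have hvm : v ∈ E := mem_filter.2 ⟨hv, rfl⟩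
  have hEc : E.card = d * c (χ v) := hd (χ v)
  have hpos : 0 < c (χ v) := by
    rcases Nat.eq_zero_or_pos (c (χ v)) with h | h
    · rw [h, mul_zero, card_eq_zero] at hEc
      simp [hEc] at hvm
    · exact h
  have hlt : ((finsetEquivFin E ⟨v, hvm⟩ : Fin _) : ℕ) < d * c (χ v) := by
    rw [← hEc]; exact (finsetEquivFin E ⟨v, hvm⟩).isLt
  rw [gIdx_eq χ c C hv rfl, Nat.div_lt_iff_lt_mul hpos]
  exact hlt


lemma key_card {V : Type*} {κ : ℕ} (χ : V → Fin κ) (c : Fin κ → ℕ) (C : Finset V) (d : ℕ)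
    (hd : ∀ i, (C.filter fun v => χ v = i).card = d * c i) {i : Fin κ} {j : ℕ} (hj : j < d) :
    ((C.filter fun v => gIdx χ c C v = j).filter fun v => χ v = i).card = c i := by
  rw [filter_filter]
  rcases Nat.eq_zero_or_pos (c i) with hci | hci
  · have hE : (C.filter fun v => χ v = i) = ∅ := by
      rw [← card_eq_zero, hd i, hci, mul_zero]
    rw [hci, card_eq_zero, filter_eq_empty_iff]
    intro v hv hcontra
    have : v ∈ (C.filter fun v => χ v = i) := mem_filter.2 ⟨hv, hcontra.2⟩
    simp [hE] at this
  · set E := C.filter (fun v => χ v = i) with hE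
    have hEc : E.card = d * c i := hd i
    have hT : (Finset.univ.filter fun k : Fin E.card => (k : ℕ) / c i = j).card = c i := by
      have h1 : (Finset.univ.filter fun k : Fin E.card => (k : ℕ) / c i = j).card
          = ((Finset.range E.card).filter fun k => k / c i = j).card := by
        refine Finset.card_bij (fun k _ => (k : ℕ)) ?_ ?_ ?_
        · intro k hk
          simp only [mem_filter, mem_univ, true_and] at hk
          simp only [mem_filter, mem_range]
          exact ⟨k.isLt, hk⟩
        · intro a _ b _ h; exact Fin.ext h
        · intro b hb
          simp only [mem_filter, mem_range] at hb
          exact ⟨⟨b, hb.1⟩, by simp [hb.2], rfl⟩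
      have h2 : ((Finset.range E.card).filter fun k => k / c i = j)
          = Finset.Ico (j * c i) ((j + 1) * c i) := by
        ext k
        simp only [mem_filter, mem_range, mem_Ico]
        constructor
        · rintro ⟨hk, rfl⟩
          refine ⟨Nat.div_mul_le_self k (c i), ?_⟩
          have h3 := Nat.div_add_mod k (c i)
          have h4 : k % c i < c i := Nat.mod_lt _ hci
          calc k = c i * (k / c i) + k % c i := h3.symm
            _ < c i * (k / c i) + c i := by omega
            _ = (k / c i + 1) * c i := by ring
        · rintro ⟨h3, h4⟩
          refine ⟨?_, Nat.div_eq_of_lt_le h3 h4⟩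
          calc k < (j + 1) * c i := h4
            _ ≤ d * c i := Nat.mul_le_mul_right _ hj
            _ = E.card := hEc.symm
      rw [h1, h2, Nat.card_Ico]
      have : (j + 1) * c i = j * c i + c i := by ring
      omega
    rw [← hT]
    refine Finset.card_bij (fun v hv =>
      finsetEquivFin E ⟨v, mem_filter.2 ⟨(mem_filter.1 hv).1, (mem_filter.1 hv).2.2⟩⟩) ?_ ?_ ?_
    · intro v hv
      simp only [mem_filter, mem_univ, true_and]
      obtain ⟨hvC, hgv, hχv⟩ := mem_filter.1 hv
      rw [gIdx_eq χ c C hvC hχv] at hgv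
      exact hgv
    · intro a ha b hb h
      have := (finsetEquivFin E).injective h
      exact congrArg Subtype.val this
    · intro k hk
      simp only [mem_filter, mem_univ, true_and] at hk
      set x := (finsetEquivFin E).symm k with hx
      have hxE : (x : V) ∈ E := x.2
      have hxC : (x : V) ∈ C := (mem_filter.1 hxE).1
      have hxχ : χ (x : V) = i := (mem_filter.1 hxE).2
      have hg : gIdx χ c C (x : V) = j := by
        rw [gIdx_eq χ c C hxC hxχ]
        have : (⟨(x : V), mem_filter.2 ⟨hxC, hxχ⟩⟩ : {y // y ∈ E}) = x := Subtype.ext rfl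
        rw [this, hx, Equiv.apply_symm_apply]
        exact hk
      refine ⟨(x : V), mem_filter.2 ⟨hxC, hg, hxχ⟩, ?_⟩
      have h6 : finsetEquivFin E ⟨(x : V), mem_filter.2 ⟨hxC, hxχ⟩⟩ = k := by
        have h5 : (⟨(x : V), mem_filter.2 ⟨hxC, hxχ⟩⟩ : {y // y ∈ E}) = x := Subtype.ext rfl
        rw [h5, hx, Equiv.apply_symm_apply]
      exact h6

/-- Partition of `C` into `d` fairlets, given by the fibers of `gIdx`. -/
noncomputable def fiberPart {V : Type*} {κ : ℕ} (χ : V → Fin κ) (c : Fin κ → ℕ) (C : Finset V)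
    (d : ℕ) (hd : ∀ i, (C.filter fun v => χ v = i).card = d * c i)
    (i0 : Fin κ) (hi0 : 0 < c i0) : Finpartition C where
  parts := (Finset.range d).image fun j => C.filter fun v => gIdx χ c C v = j
  supIndep := by
    rw [Finset.supIndep_iff_pairwiseDisjoint]
    intro s hs t ht hst
    simp only [coe_image, Set.mem_image, mem_coe, mem_range] at hs ht
    obtain ⟨j1, hj1, rfl⟩ := hs
    obtain ⟨j2, hj2, rfl⟩ := ht
    have hne : j1 ≠ j2 := fun h => hst (by rw [h])
    simp only [Function.onFun, id_eq]
    rw [Finset.disjoint_left]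
    intro a ha hb
    exact hne (((mem_filter.1 ha).2.symm).trans (mem_filter.1 hb).2)
  sup_parts := by
    apply le_antisymm
    · rw [Finset.sup_le_iff]
      intro t ht
      simp only [mem_image, mem_range] at ht
      obtain ⟨j, hj, rfl⟩ := ht
      exact filter_subset _ _
    · intro v hv
      have hlt := gIdx_lt χ c C d hd hv
      have hmem : (C.filter fun w => gIdx χ c C w = gIdx χ c C v)
          ∈ (Finset.range d).image (fun j => C.filter fun v => gIdx χ c C v = j) :=
        mem_image.2 ⟨gIdx χ c C v, mem_range.2 hlt, rfl⟩
      exact (Finset.le_sup (f := id) hmem) (mem_filter.2 ⟨hv, rfl⟩)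
  bot_notMem := by
    intro h
    simp only [bot_eq_empty, mem_image, mem_range] at h
    obtain ⟨j, hj, hjE⟩ := h
    have hk := key_card χ c C d hd (i := i0) hj
    rw [hjE] at hk
    simp only [filter_empty, card_empty] at hk
    omega

lemma exists_better {V : Type*} [Fintype V] {κ : ℕ} (G : SimpleGraph V)
    (χ : V → Fin κ) (c : Fin κ → ℕ)
    (M : Finset V) (hM : ∀ v w : V, G.Adj v w → v ∈ M ∨ w ∈ M)
    (P : Finpartition (Finset.univ : Finset V))
    (hPfair : IsFairClustering χ c P)
    (C : Finset V) (hC : C ∈ P.parts) (hCM : C ∩ M = ∅)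
    (d : ℕ) (hd2 : 2 ≤ d) (hd : ∀ i, (C.filter fun v => χ v = i).card = d * c i)
    (i0 : Fin κ) (hi0 : 0 < c i0) :
    ∃ Q : Finpartition (Finset.univ : Finset V),
      IsFairClustering χ c Q ∧ clusterCost G Q < clusterCost G P := by
  classical
  set Qf : ∀ t ∈ P.parts, Finpartition t :=
    (fun t ht => if h : t = C then (fiberPart χ c C d hd i0 hi0).copy h.symm
      else Finpartition.indiscrete (P.ne_bot ht)) with hQf
  set Q : Finpartition (Finset.univ : Finset V) := P.bind Qf with hQ
  -- no edges inside C
  have hCedge : ∀ v ∈ C, ∀ w ∈ C, ¬ G.Adj v w := by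
    intro v hv w hw hadj
    rcases hM v w hadj with h | h
    · exact (notMem_empty v) (hCM ▸ mem_inter.2 ⟨hv, h⟩)
    · exact (notMem_empty w) (hCM ▸ mem_inter.2 ⟨hw, h⟩)
  -- fibers are parts of Q
  have hmemfib : ∀ j, j < d → (C.filter fun v => gIdx χ c C v = j) ∈ Q.parts := by
    intro j hj
    refine Finpartition.mem_bind.2 ⟨C, hC, ?_⟩
    simp only [hQf, dif_pos rfl, Finpartition.copy_parts]
    show _ ∈ (fiberPart χ c C d hd i0 hi0).parts
    exact mem_image.2 ⟨j, mem_range.2 hj, rfl⟩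
  -- other parts of P are parts of Q
  have hmemother : ∀ t ∈ P.parts, t ≠ C → t ∈ Q.parts := by
    intro t ht h
    refine Finpartition.mem_bind.2 ⟨t, ht, ?_⟩
    simp only [hQf, dif_neg h, Finpartition.indiscrete_parts, mem_singleton]
  -- same cluster in Q implies same cluster in P
  have hsame : ∀ v w : V, sameCluster Q v w → sameCluster P v w := by
    rintro v w ⟨t, ht, hvt, hwt⟩
    obtain ⟨u, hu, htu⟩ := Finpartition.mem_bind.1 ht
    have hle : t ⊆ u := (Qf u hu).le htu
    exact ⟨u, hu, hle hvt, hle hwt⟩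
  -- same cluster in P implies same cluster in Q, for adjacent pairs
  have hsame2 : ∀ v w : V, G.Adj v w → sameCluster P v w → sameCluster Q v w := by
    rintro v w hadj ⟨t, ht, hvt, hwt⟩
    have hne : t ≠ C := by
      rintro rfl
      exact hCedge v hvt w hwt hadj
    exact ⟨t, hmemother t ht hne, hvt, hwt⟩
  refine ⟨Q, ?_, ?_⟩
  · -- fairness
    intro t ht
    obtain ⟨u, hu, htu⟩ := Finpartition.mem_bind.1 ht
    by_cases h : u = C
    · simp only [hQf, dif_pos h, Finpartition.copy_parts] at htu
      have htu' : t ∈ (fiberPart χ c C d hd i0 hi0).parts := htu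
      obtain ⟨j, hj, rfl⟩ := mem_image.1 htu'
      exact ⟨1, fun i => by rw [one_mul]; exact key_card χ c C d hd (mem_range.1 hj)⟩
    · simp only [hQf, dif_neg h, Finpartition.indiscrete_parts, mem_singleton] at htu
      exact htu ▸ hPfair u hu
  · -- cost strictly decreases
    have hA : (Finset.univ.offDiag.filter fun p : V × V =>
          G.Adj p.1 p.2 ∧ ¬ sameCluster Q p.1 p.2)
        = (Finset.univ.offDiag.filter fun p : V × V =>
          G.Adj p.1 p.2 ∧ ¬ sameCluster P p.1 p.2) := by
      ext p
      simp only [mem_filter]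
      constructor
      · rintro ⟨hoff, hadj, hns⟩
        exact ⟨hoff, hadj, fun hs => hns (hsame2 _ _ hadj hs)⟩
      · rintro ⟨hoff, hadj, hns⟩
        exact ⟨hoff, hadj, fun hs => hns (hsame _ _ hs)⟩
    set BQ := Finset.univ.offDiag.filter fun p : V × V =>
      ¬ G.Adj p.1 p.2 ∧ sameCluster Q p.1 p.2 with hBQ
    set BP := Finset.univ.offDiag.filter fun p : V × V =>
      ¬ G.Adj p.1 p.2 ∧ sameCluster P p.1 p.2 with hBP
    -- pick witnesses in fibers 0 and 1
    obtain ⟨v, hv⟩ : ∃ v, v ∈ ((C.filter fun v => gIdx χ c C v = 0).filter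
        fun v => χ v = i0) := by
      have h := key_card χ c C d hd (i := i0) (j := 0) (by omega)
      exact card_pos.1 (by rw [h]; exact hi0)
    obtain ⟨w, hw⟩ : ∃ w, w ∈ ((C.filter fun v => gIdx χ c C v = 1).filter
        fun v => χ v = i0) := by
      have h := key_card χ c C d hd (i := i0) (j := 1) (by omega)
      exact card_pos.1 (by rw [h]; exact hi0)
    have hv0 : v ∈ C.filter fun v => gIdx χ c C v = 0 := (mem_filter.1 hv).1
    have hw1 : w ∈ C.filter fun v => gIdx χ c C v = 1 := (mem_filter.1 hw).1
    have hvC : v ∈ C := (mem_filter.1 hv0).1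
    have hwC : w ∈ C := (mem_filter.1 hw1).1
    have hgv : gIdx χ c C v = 0 := (mem_filter.1 hv0).2
    have hgw : gIdx χ c C w = 1 := (mem_filter.1 hw1).2
    have hvw : v ≠ w := by
      rintro rfl
      rw [hgv] at hgw
      exact absurd hgw (by omega)
    have hnadj : ¬ G.Adj v w := hCedge v hvC w hwC
    have hsP : sameCluster P v w := ⟨C, hC, hvC, hwC⟩
    have hnsQ : ¬ sameCluster Q v w := by
      rintro ⟨t, ht, hvt, hwt⟩
      have e0 : t = C.filter fun v => gIdx χ c C v = 0 :=
        Q.eq_of_mem_parts ht (hmemfib 0 (by omega)) hvt hv0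
      have e1 : t = C.filter fun v => gIdx χ c C v = 1 :=
        Q.eq_of_mem_parts ht (hmemfib 1 (by omega)) hwt hw1
      have : v ∈ C.filter fun v => gIdx χ c C v = 1 := by
        rw [← e1]; exact hvt
      have := (mem_filter.1 this).2
      omega
    -- the union bound
    have hmemvw : (v, w) ∈ BP := by
      rw [hBP]
      refine mem_filter.2 ⟨mem_offDiag.2 ⟨mem_univ _, mem_univ _, hvw⟩, hnadj, hsP⟩
    have hmemwv : (w, v) ∈ BP := by
      rw [hBP]
      refine mem_filter.2 ⟨mem_offDiag.2 ⟨mem_univ _, mem_univ _, hvw.symm⟩,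
        fun h => hnadj h.symm, ⟨C, hC, hwC, hvC⟩⟩
    have hnotvw : (v, w) ∉ BQ := by
      rw [hBQ]
      intro h
      exact hnsQ (mem_filter.1 h).2.2
    have hnotwv : (w, v) ∉ BQ := by
      rw [hBQ]
      intro h
      exact hnsQ (by obtain ⟨t, ht, h1, h2⟩ := (mem_filter.1 h).2.2; exact ⟨t, ht, h2, h1⟩)
    have hBsub : BQ ⊆ BP := by
      intro p hp
      rw [hBQ] at hp
      rw [hBP]
      obtain ⟨hoff, hna, hs⟩ := mem_filter.1 hp
      exact mem_filter.2 ⟨hoff, hna, hsame _ _ hs⟩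
    have hunion : BQ ∪ {(v, w), (w, v)} ⊆ BP := by
      intro p hp
      rcases mem_union.1 hp with h | h
      · exact hBsub h
      · rcases mem_insert.1 h with h | h
        · exact h ▸ hmemvw
        · exact (mem_singleton.1 h) ▸ hmemwv
    have hdisj : Disjoint BQ ({(v, w), (w, v)} : Finset (V × V)) := by
      rw [Finset.disjoint_right]
      intro p hp
      rcases mem_insert.1 hp with h | h
      · exact h ▸ hnotvw
      · exact (mem_singleton.1 h) ▸ hnotwv
    have hcard2 : ({(v, w), (w, v)} : Finset (V × V)).card = 2 := by
      rw [card_insert_of_notMem (by simp [Prod.ext_iff]; intro h; exact absurd h hvw),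
        card_singleton]
    have hle : BQ.card + 2 ≤ BP.card := by
      calc BQ.card + 2 = (BQ ∪ {(v, w), (w, v)}).card := by
            rw [card_union_of_disjoint hdisj, hcard2]
        _ ≤ BP.card := card_le_card hunion
    rw [clusterCost, clusterCost, hA, ← hBQ, ← hBP]
    apply Nat.add_lt_add_left
    have h2 : (BQ.card + 2) / 2 ≤ BP.card / 2 := Nat.div_le_div_right hle
    rw [Nat.add_div_right _ (by norm_num)] at h2
    omega


/-- If `M` is a vertex cover of `G` and `P` is a minimum-cost fair
clustering of `G`, then every cluster of `P` disjoint from `M` has size exactly the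
fairlet size `c̃ = ∑ i, c i`. -/
theorem cluster_disjoint_vertexCover_card_eq_fairletSize
    {V : Type*} [Fintype V] {κ : ℕ} (G : SimpleGraph V)
    (χ : V → Fin κ) (c : Fin κ → ℕ) (hc : c ≠ 0)
    (M : Finset V) (hM : ∀ v w : V, G.Adj v w → v ∈ M ∨ w ∈ M)
    (P : Finpartition (Finset.univ : Finset V))
    (hPfair : IsFairClustering χ c P)
    (hPmin : ∀ Q : Finpartition (Finset.univ : Finset V),
      IsFairClustering χ c Q → clusterCost G P ≤ clusterCost G Q)
    (C : Finset V) (hC : C ∈ P.parts) (hCM : C ∩ M = ∅) :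
    C.card = ∑ i, c i := by
  classical
  obtain ⟨d, hd⟩ := hPfair C hC
  have hCne : C.Nonempty := P.nonempty_of_mem_parts hC
  obtain ⟨i0, hi0⟩ : ∃ i, 0 < c i := by
    by_contra h
    push_neg at h
    exact hc (funext fun i => by have := h i; simp only [Pi.zero_apply]; omega)
  have hcard : C.card = d * ∑ i, c i := by
    rw [Finset.card_eq_sum_card_fiberwise (f := χ) (t := Finset.univ) (fun v _ => mem_univ _),
      Finset.mul_sum]
    exact Finset.sum_congr rfl fun i _ => hd i
  have hd1 : 1 ≤ d := by
    rcases Nat.eq_zero_or_pos d with h | h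
    · subst h
      simp only [zero_mul] at hcard
      have := hCne.card_pos
      omega
    · exact h
  rcases eq_or_lt_of_le hd1 with h1 | h2
  · rw [hcard, ← h1, one_mul]
  · exfalso
    obtain ⟨Q, hQfair, hQlt⟩ := exists_better G χ c M hM P hPfair C hC hCM d h2 hd i0 hi0
    exact absurd (hPmin Q hQfair) (not_le.2 hQlt)

end
end

section
/- Let M be a vertex cover of a finite simple graph G with colored vertices, and let P be a fair clustering of G containing a cluster C with C ∩ M = ∅ and |C| > c̃ (the fairlet size). Then there exists a fair clustering P' of G with cost(P') < cost(P). -/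
open Finset

open scoped Classical

noncomputable section

variable {V : Type*}

/-! A cluster disjoint from a vertex cover is an independent set, so cutting it in two separates
no edge but does separate non-adjacent pairs, which strictly lowers the cost. A fair cluster `C`
with `|C| = d · c̃ > c̃` has `d ≥ 2`, so it can be cut into a fairlet, with exactly `c i` vertices
of colour `i`, and a remainder with `(d - 1) · c i` vertices of colour `i`: both pieces are fair
and nonempty. -/

section Fairlet

variable {ι : Type*} [Fintype ι] [DecidableEq ι] (f : V → ι)

theorem card_eq_mul_sum_of_card_filter_eq {W : Finset V} {c : ι → ℕ} {d : ℕ}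
    (hW : ∀ i, #(W.filter (f · = i)) = d * c i) : #W = d * ∑ i, c i := by
  rw [card_eq_sum_card_fiberwise (fun x _ => mem_univ (f x)), mul_sum]
  exact sum_congr rfl fun i _ => hW i

theorem exists_subset_card_filter_eq {W : Finset V} {k : ι → ℕ}
    (hk : ∀ i, k i ≤ #(W.filter (f · = i))) :
    ∃ S ⊆ W, ∀ i, #(S.filter (f · = i)) = k i := by
  choose T hTW hTk using fun i => exists_subset_card_eq (hk i)
  have hT : ∀ j, ∀ v ∈ T j, f v = j := fun j v hv => (mem_filter.1 (hTW j hv)).2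
  refine ⟨univ.biUnion T, biUnion_subset.2 fun i _ => (hTW i).trans (filter_subset _ _),
    fun i => ?_⟩
  suffices (univ.biUnion T).filter (f · = i) = T i by rw [this, hTk]
  ext v
  simp only [mem_filter, mem_biUnion, mem_univ, true_and]
  constructor
  · rintro ⟨⟨j, hv⟩, rfl⟩
    rwa [hT j v hv]
  · exact fun hv => ⟨⟨i, hv⟩, hT i v hv⟩

theorem card_filter_sdiff_of_subset {S W : Finset V} (h : S ⊆ W) (p : V → Prop)
    [DecidablePred p] : #((W \ S).filter p) = #(W.filter p) - #(S.filter p) := by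
  have hfilter : (W \ S).filter p = W.filter p \ S.filter p := by
    ext v
    simp only [mem_filter, mem_sdiff]
    tauto
  rw [hfilter, card_sdiff_of_subset (filter_subset_filter p h)]

theorem exists_fairlet_subset {W : Finset V} {c : ι → ℕ} {d : ℕ}
    (hW : ∀ i, #(W.filter (f · = i)) = d * c i) (hd : 1 ≤ d) :
    ∃ S ⊆ W, (∀ i, #(S.filter (f · = i)) = c i) ∧
      ∀ i, #((W \ S).filter (f · = i)) = (d - 1) * c i := by
  obtain ⟨S, hSW, hS⟩ := exists_subset_card_filter_eq f (k := c)
    fun i => (hW i).symm ▸ Nat.le_mul_of_pos_left _ hd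
  refine ⟨S, hSW, hS, fun i => ?_⟩
  rw [card_filter_sdiff_of_subset hSW, hW i, hS i, Nat.sub_one_mul]

end Fairlet

theorem isFair_empty {κ : ℕ} (χ : V → Fin κ) (c : Fin κ → ℕ) : IsFair χ c ∅ :=
  ⟨0, by simp⟩

section Split

variable [Fintype V] {P Q : Finpartition (univ : Finset V)} {S C : Finset V} {v w : V}

theorem sameCluster_comm : sameCluster P v w ↔ sameCluster P w v := by
  simp only [sameCluster, and_comm]

theorem sameCluster_iff_mem_part : sameCluster P v w ↔ w ∈ P.part v := by
  simp only [Finpartition.mem_part_iff_exists, sameCluster, and_comm]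

theorem sameCluster_inf_iff :
    sameCluster (P ⊓ Q) v w ↔ sameCluster P v w ∧ sameCluster Q v w := by
  constructor
  · rintro ⟨u, hu, hvu, hwu⟩
    obtain ⟨⟨t, q⟩, htq, rfl⟩ := mem_image.1 (mem_of_mem_erase hu)
    rw [mem_product] at htq
    rw [inf_eq_inter, mem_inter] at hvu hwu
    exact ⟨⟨t, htq.1, hvu.1, hwu.1⟩, ⟨q, htq.2, hvu.2, hwu.2⟩⟩
  · rintro ⟨⟨t, ht, hvt, hwt⟩, ⟨q, hq, hvq, hwq⟩⟩
    refine ⟨t ∩ q, ?_, mem_inter.2 ⟨hvt, hvq⟩, mem_inter.2 ⟨hwt, hwq⟩⟩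
    rw [Finpartition.parts_inf]
    exact mem_erase.2 ⟨ne_empty_of_mem (mem_inter.2 ⟨hvt, hvq⟩),
      mem_image.2 ⟨(t, q), mem_product.2 ⟨ht, hq⟩, rfl⟩⟩

theorem sameCluster_ofSetoid_iff {s : Setoid V} [DecidableRel s.r] :
    sameCluster (Finpartition.ofSetoid s) v w ↔ s v w := by
  rw [sameCluster_iff_mem_part, Finpartition.mem_part_ofSetoid_iff_rel]

/-- Cut every cluster `t` of `P` into `t ∩ S` and `t \ S`. -/
def Finpartition.splitBy (P : Finpartition (univ : Finset V)) (S : Finset V) :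
    Finpartition (univ : Finset V) :=
  P ⊓ Finpartition.ofSetoid (Setoid.ker (· ∈ S))

theorem sameCluster_splitBy_iff :
    sameCluster (P.splitBy S) v w ↔ sameCluster P v w ∧ (v ∈ S ↔ w ∈ S) := by
  rw [Finpartition.splitBy, sameCluster_inf_iff, sameCluster_ofSetoid_iff, Setoid.ker_def,
    eq_iff_iff]

theorem exists_eq_inter_or_eq_sdiff_of_mem_splitBy {u : Finset V}
    (hu : u ∈ (P.splitBy S).parts) : ∃ t ∈ P.parts, u = t ∩ S ∨ u = t \ S := by
  obtain ⟨v, hv⟩ := (P.splitBy S).nonempty_of_mem_parts hu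
  have hmem : ∀ w, w ∈ u ↔ w ∈ P.part v ∧ (v ∈ S ↔ w ∈ S) := fun w => by
    rw [← sameCluster_iff_mem_part, ← sameCluster_splitBy_iff, sameCluster_iff_mem_part,
      (P.splitBy S).part_eq_of_mem hu hv]
  refine ⟨P.part v, P.part_mem.2 (mem_univ v), ?_⟩
  by_cases hvS : v ∈ S
  · exact Or.inl (ext fun w => by simp [hmem, hvS])
  · exact Or.inr (ext fun w => by simp [hmem, hvS])

theorem IsFairClustering.splitBy {κ : ℕ} {χ : V → Fin κ} {c : Fin κ → ℕ}
    (hP : IsFairClustering χ c P) (hC : C ∈ P.parts) (hSC : S ⊆ C) (hS : IsFair χ c S)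
    (hCS : IsFair χ c (C \ S)) : IsFairClustering χ c (P.splitBy S) := by
  intro u hu
  have hdisj : ∀ t ∈ P.parts, t ≠ C → Disjoint t S := fun t ht htC =>
    (show Disjoint t C from P.disjoint ht hC htC).mono_right hSC
  obtain ⟨t, ht, rfl | rfl⟩ := exists_eq_inter_or_eq_sdiff_of_mem_splitBy hu <;>
    obtain rfl | htC := eq_or_ne t C
  · rwa [inter_eq_right.2 hSC]
  · rw [disjoint_iff_inter_eq_empty.1 (hdisj t ht htC)]
    exact isFair_empty χ c
  · exact hCS
  · rw [sdiff_eq_self_of_disjoint (hdisj t ht htC)]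
    exact hP t ht

theorem clusterCost_lt_of_separates (G : SimpleGraph V)
    (hQP : ∀ x y, sameCluster Q x y → sameCluster P x y)
    (hPQ : ∀ x y, G.Adj x y → sameCluster P x y → sameCluster Q x y)
    (hvw : v ≠ w) (hnadj : ¬ G.Adj v w) (hP : sameCluster P v w) (hQ : ¬ sameCluster Q v w) :
    clusterCost G Q < clusterCost G P := by
  have hcut : (univ.offDiag.filter fun p : V × V => G.Adj p.1 p.2 ∧ ¬ sameCluster Q p.1 p.2) =
      univ.offDiag.filter fun p : V × V => G.Adj p.1 p.2 ∧ ¬ sameCluster P p.1 p.2 :=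
    filter_congr fun p _ => and_congr_right fun hadj =>
      not_congr ⟨hQP p.1 p.2, hPQ p.1 p.2 hadj⟩
  set A := univ.offDiag.filter fun p : V × V => ¬ G.Adj p.1 p.2 ∧ sameCluster P p.1 p.2
  set A' := univ.offDiag.filter fun p : V × V => ¬ G.Adj p.1 p.2 ∧ sameCluster Q p.1 p.2
  have hpair : {(v, w), (w, v)} ⊆ A := by
    intro p hp
    rcases mem_insert.1 hp with rfl | hp
    · simpa [A, hvw] using ⟨hnadj, hP⟩
    · rw [mem_singleton.1 hp]
      simpa [A, hvw.symm, G.adj_comm] using ⟨hnadj, sameCluster_comm.1 hP⟩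
  have hA' : A' ⊆ A \ {(v, w), (w, v)} := by
    intro p hp
    simp only [A', mem_filter] at hp
    refine mem_sdiff.2 ⟨mem_filter.2 ⟨hp.1, hp.2.1, hQP _ _ hp.2.2⟩, ?_⟩
    rw [mem_insert, mem_singleton]
    rintro (rfl | rfl)
    · exact hQ hp.2.2
    · exact hQ (sameCluster_comm.1 hp.2.2)
  have hcard : #A' + 2 ≤ #A :=
    calc #A' + 2 ≤ #(A \ {(v, w), (w, v)}) + #{(v, w), (w, v)} :=
          add_le_add (card_le_card hA') (card_pair (by simp [hvw])).ge
      _ = #A := card_sdiff_add_card_eq_card hpair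
  rw [clusterCost, clusterCost, hcut]
  change _ + #A' / 2 < _ + #A / 2
  omega

theorem clusterCost_splitBy_lt (G : SimpleGraph V) (hC : C ∈ P.parts)
    (hind : G.IsIndepSet C) (hSC : S ⊆ C) (hS : S.Nonempty) (hCS : (C \ S).Nonempty) :
    clusterCost G (P.splitBy S) < clusterCost G P := by
  obtain ⟨v, hv⟩ := hS
  obtain ⟨w, hw⟩ := hCS
  obtain ⟨hwC, hwS⟩ := mem_sdiff.1 hw
  have hvw : v ≠ w := fun h => hwS (h ▸ hv)
  refine clusterCost_lt_of_separates G (fun _ _ h => (sameCluster_splitBy_iff.1 h).1) ?_ hvw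
    (hind (hSC hv) hwC hvw) ⟨C, hC, hSC hv, hwC⟩
    fun h => hwS ((sameCluster_splitBy_iff.1 h).2.1 hv)
  rintro x y hxy ⟨t, ht, hxt, hyt⟩
  -- an edge inside a cluster keeps that cluster away from the independent cluster `C`
  have hout : ∀ z ∈ t, z ∉ C := fun z hzt hzC => by
    obtain rfl := P.eq_of_mem_parts ht hC hzt hzC
    exact hind hxt hyt hxy.ne hxy
  exact sameCluster_splitBy_iff.2
    ⟨⟨t, ht, hxt, hyt⟩, iff_of_false (fun h => hout x hxt (hSC h)) fun h => hout y hyt (hSC h)⟩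

end Split

theorem exists_cheaper_fair_clustering_of_large_independent_cluster_general
    {V : Type*} [Fintype V] {κ : ℕ} (G : SimpleGraph V)
    (χ : V → Fin κ) (c : Fin κ → ℕ)
    (M : Finset V) (hM : ∀ v w : V, G.Adj v w → v ∈ M ∨ w ∈ M)
    (P : Finpartition (Finset.univ : Finset V))
    (hPfair : IsFairClustering χ c P)
    (C : Finset V) (hC : C ∈ P.parts) (hCM : C ∩ M = ∅)
    (hCbig : (∑ i, c i) < C.card) :
    ∃ P' : Finpartition (Finset.univ : Finset V),
      IsFairClustering χ c P' ∧ clusterCost G P' < clusterCost G P := by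
  have hind : G.IsIndepSet C := fun v hv w hw _ hadj =>
    (hM v w hadj).elim (fun h => eq_empty_iff_forall_notMem.1 hCM v (mem_inter.2 ⟨hv, h⟩))
      fun h => eq_empty_iff_forall_notMem.1 hCM w (mem_inter.2 ⟨hw, h⟩)
  obtain ⟨d, hd⟩ := hPfair C hC
  have hCcard := card_eq_mul_sum_of_card_filter_eq χ hd
  have hsum : 0 < ∑ i, c i := Nat.pos_of_ne_zero fun h => by rw [h, mul_zero] at hCcard; omega
  have hd1 : 1 < d := Nat.lt_of_mul_lt_mul_right (a := ∑ i, c i) (by omega)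
  obtain ⟨S, hSC, hS, hCS⟩ := exists_fairlet_subset χ hd hd1.le
  have hSne : S.Nonempty := by
    rw [← card_pos, card_eq_mul_sum_of_card_filter_eq χ (d := 1) (by simpa using hS)]
    omega
  have hCSne : (C \ S).Nonempty := by
    rw [← card_pos, card_eq_mul_sum_of_card_filter_eq χ hCS]
    exact Nat.mul_pos (by omega) hsum
  exact ⟨P.splitBy S, hPfair.splitBy hC hSC ⟨1, by simpa using hS⟩ ⟨d - 1, hCS⟩,
    clusterCost_splitBy_lt G hC hind hSC hSne hCSne⟩

/-- If `M` is a vertex cover of `G` and the fair clustering `P` contains a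
cluster `C` disjoint from `M` of size larger than the fairlet size `c̃ = ∑ i, c i`, then some
fair clustering `P'` has strictly smaller cost than `P`. -/
theorem exists_cheaper_fair_clustering_of_large_independent_cluster
    {V : Type*} [Fintype V] {κ : ℕ} (G : SimpleGraph V)
    (χ : V → Fin κ) (c : Fin κ → ℕ) (hc : c ≠ 0)
    (M : Finset V) (hM : ∀ v w : V, G.Adj v w → v ∈ M ∨ w ∈ M)
    (P : Finpartition (Finset.univ : Finset V))
    (hPfair : IsFairClustering χ c P)
    (C : Finset V) (hC : C ∈ P.parts) (hCM : C ∩ M = ∅)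
    (hCbig : (∑ i, c i) < C.card) :
    ∃ P' : Finpartition (Finset.univ : Finset V),
      IsFairClustering χ c P' ∧ clusterCost G P' < clusterCost G P :=
  exists_cheaper_fair_clustering_of_large_independent_cluster_general G χ c M hM P hPfair C hC hCM
    hCbig

end
end

section
/- Let tw be a natural number and let G be a finite simple graph with colored vertices such that for every vertex set S the induced subgraph G[S] has at most tw·|S| edges. If G admits at least one fair clustering, then G admits a fair clustering P whose cost is minimum among all fair clusterings of G and in which every cluster has size at most max(24·tw, c̃), where c̃ is the fairlet size. -/
open Finset

open scoped Classical

noncomputable section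

variable {V : Type*}

/-- The number of edges of `G` with both endpoints in `S`, i.e. the number of edges of the
induced subgraph `G[S]`. (Ordered pairs are counted and divided by two.) -/
def edgesIn (G : SimpleGraph V) (S : Finset V) : ℕ :=
  (S.offDiag.filter fun p : V × V => G.Adj p.1 p.2).card / 2

/-- A finset of ordered pairs that is closed under swapping and avoids the diagonal
has even cardinality. -/
lemma even_card_of_swap_mem {α : Type*} [DecidableEq α] :
    ∀ s : Finset (α × α), (∀ p ∈ s, Prod.swap p ∈ s) → (∀ p ∈ s, p.1 ≠ p.2) → Even s.card := by
  intro s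
  induction s using Finset.strongInduction with
  | _ s ih =>
    intro hswap hne
    rcases s.eq_empty_or_nonempty with rfl | ⟨p, hp⟩
    · simp
    have hps : Prod.swap p ∈ s := hswap p hp
    have hpp : p ≠ Prod.swap p := by
      intro h
      exact hne p hp (congrArg Prod.fst h)
    have hss : ({p, Prod.swap p} : Finset (α × α)) ⊆ s := by
      intro q hq
      rcases Finset.mem_insert.1 hq with rfl | hq
      · exact hp
      · exact (Finset.mem_singleton.1 hq) ▸ hps
    have hcard2 : ({p, Prod.swap p} : Finset (α × α)).card = 2 := Finset.card_pair hpp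
    have hsub : s \ {p, Prod.swap p} ⊂ s :=
      Finset.sdiff_ssubset hss ⟨p, Finset.mem_insert_self _ _⟩
    have h1 : ∀ q ∈ s \ {p, Prod.swap p}, Prod.swap q ∈ s \ {p, Prod.swap p} := by
      intro q hq
      rw [Finset.mem_sdiff, Finset.mem_insert, Finset.mem_singleton] at hq ⊢
      push_neg at hq ⊢
      refine ⟨hswap q hq.1, ?_, ?_⟩
      · intro h
        exact hq.2.2 (by rw [← h, Prod.swap_swap])
      · intro h
        exact hq.2.1 (Prod.swap_injective h)
    have h2 : ∀ q ∈ s \ {p, Prod.swap p}, q.1 ≠ q.2 := fun q hq =>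
      hne q (Finset.mem_sdiff.1 hq).1
    obtain ⟨k, hk⟩ := ih _ hsub h1 h2
    have hle : 2 ≤ s.card := hcard2 ▸ Finset.card_le_card hss
    have : (s \ {p, Prod.swap p}).card = s.card - 2 := by
      rw [Finset.card_sdiff_of_subset hss, hcard2]
    exact ⟨k + 1, by omega⟩

/-- Twice the cluster cost equals the number of ordered cut edges plus the number of ordered
intra-cluster non-edges. -/
lemma two_mul_clusterCost [Fintype V] (G : SimpleGraph V)
    (P : Finpartition (Finset.univ : Finset V)) :
    2 * clusterCost G P
      = (Finset.univ.offDiag.filter fun p : V × V =>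
            G.Adj p.1 p.2 ∧ ¬ sameCluster P p.1 p.2).card
        + (Finset.univ.offDiag.filter fun p : V × V =>
            ¬ G.Adj p.1 p.2 ∧ sameCluster P p.1 p.2).card := by
  classical
  have hS : ∀ p : V × V, p ∈ (Finset.univ : Finset V).offDiag →
      Prod.swap p ∈ (Finset.univ : Finset V).offDiag ∧ p.1 ≠ p.2 := by
    intro p hp
    rw [Finset.mem_offDiag] at hp
    exact ⟨Finset.mem_offDiag.2 ⟨Finset.mem_univ _, Finset.mem_univ _, hp.2.2.symm⟩, hp.2.2⟩
  have hsymm : ∀ v w, sameCluster P v w → sameCluster P w v := by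
    rintro v w ⟨u, hu, hv, hw⟩
    exact ⟨u, hu, hw, hv⟩
  have h1 : Even (Finset.univ.offDiag.filter fun p : V × V =>
      G.Adj p.1 p.2 ∧ ¬ sameCluster P p.1 p.2).card := by
    apply even_card_of_swap_mem
    · intro p hp
      rw [Finset.mem_filter] at hp ⊢
      exact ⟨(hS p hp.1).1, hp.2.1.symm, fun h => hp.2.2 (hsymm _ _ h)⟩
    · intro p hp
      exact (hS p (Finset.mem_filter.1 hp).1).2
  have h2 : Even (Finset.univ.offDiag.filter fun p : V × V =>
      ¬ G.Adj p.1 p.2 ∧ sameCluster P p.1 p.2).card := by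
    apply even_card_of_swap_mem
    · intro p hp
      rw [Finset.mem_filter] at hp ⊢
      exact ⟨(hS p hp.1).1, fun h => hp.2.1 h.symm, hsymm _ _ hp.2.2⟩
    · intro p hp
      exact (hS p (Finset.mem_filter.1 hp).1).2
  obtain ⟨k, hk⟩ := h1
  obtain ⟨l, hl⟩ := h2
  unfold clusterCost
  omega

/-- The two-part partition of `t` into `t1` and `t \ t1`. -/
def splitPartition {α : Type*} [DecidableEq α] {t t1 : Finset α}
    (h1 : t1 ⊆ t) (hne1 : t1.Nonempty) (hne2 : (t \ t1).Nonempty) : Finpartition t where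
  parts := {t1, t \ t1}
  supIndep := by
    have hne : t1 ≠ t \ t1 := by
      intro h
      obtain ⟨x, hx⟩ := hne1
      exact (Finset.mem_sdiff.1 (h ▸ hx)).2 hx
    rw [Finset.supIndep_pair hne]
    exact Finset.disjoint_sdiff
  sup_parts := by
    rw [Finset.sup_insert, Finset.sup_singleton, id, id]
    show t1 ⊔ (t \ t1) = t
    rw [sup_eq_union]
    exact Finset.union_sdiff_of_subset h1
  bot_notMem := by
    simp only [bot_eq_empty, Finset.mem_insert, Finset.mem_singleton]
    push_neg
    exact ⟨Ne.symm hne1.ne_empty, Ne.symm hne2.ne_empty⟩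

@[simp] lemma splitPartition_parts {α : Type*} [DecidableEq α] {t t1 : Finset α}
    (h1 : t1 ⊆ t) (hne1 : t1.Nonempty) (hne2 : (t \ t1).Nonempty) :
    (splitPartition h1 hne1 hne2).parts = {t1, t \ t1} := rfl

/-- Splitting a part `t` into `t1` and `t \ t1` strictly decreases the cost as soon as the
number of ordered crossing edges (at most `2 * tw * |t|`) is strictly smaller than
`|t1| * |t \ t1|`. -/
lemma cost_lt_of_split [Fintype V] (G : SimpleGraph V) (tw : ℕ)
    (hdensity : ∀ S : Finset V, edgesIn G S ≤ tw * S.card)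
    (P : Finpartition (Finset.univ : Finset V)) {t t1 : Finset V}
    (ht : t ∈ P.parts) (h1 : t1 ⊆ t) (hne1 : t1.Nonempty) (hne2 : (t \ t1).Nonempty)
    (hsize : 2 * (tw * t.card) < t1.card * (t \ t1).card) :
    ∃ P' : Finpartition (Finset.univ : Finset V),
      (∀ b ∈ P'.parts, b = t1 ∨ b = t \ t1 ∨ b ∈ P.parts) ∧
      clusterCost G P' < clusterCost G P := by
  classical
  have hdisj : Disjoint t1 (t \ t1) := Finset.disjoint_sdiff
  have h2 : t \ t1 ⊆ t := Finset.sdiff_subset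
  set P' : Finpartition (Finset.univ : Finset V) :=
    P.bind (fun A hA => if h : A = t then (splitPartition h1 hne1 hne2).copy h.symm
      else Finpartition.indiscrete (P.ne_bot hA)) with hP'
  have hmem : ∀ b : Finset V, b ∈ P'.parts ↔ (b = t1 ∨ b = t \ t1 ∨ (b ∈ P.parts ∧ b ≠ t)) := by
    intro b
    rw [hP', Finpartition.mem_bind]
    constructor
    · rintro ⟨A, hA, hb⟩
      by_cases h : A = t
      · subst h
        rw [dif_pos rfl] at hb
        simp only [Finpartition.copy_parts, splitPartition_parts, Finset.mem_insert,
          Finset.mem_singleton] at hb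
        rcases hb with rfl | rfl
        · exact Or.inl rfl
        · exact Or.inr (Or.inl rfl)
      · rw [dif_neg h] at hb
        simp only [Finpartition.indiscrete_parts, Finset.mem_singleton] at hb
        subst hb
        exact Or.inr (Or.inr ⟨hA, h⟩)
    · rintro (rfl | rfl | ⟨hb, hbt⟩)
      · exact ⟨t, ht, by rw [dif_pos rfl]; simp⟩
      · exact ⟨t, ht, by rw [dif_pos rfl]; simp⟩
      · exact ⟨b, hb, by rw [dif_neg hbt]; simp⟩
  set cross : V × V → Prop :=
    fun p => (p.1 ∈ t1 ∧ p.2 ∈ t \ t1) ∨ (p.1 ∈ t \ t1 ∧ p.2 ∈ t1) with hcrossdef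
  have hcross_same : ∀ p : V × V, cross p → sameCluster P p.1 p.2 := by
    rintro p (⟨hv, hw⟩ | ⟨hv, hw⟩)
    · exact ⟨t, ht, h1 hv, h2 hw⟩
    · exact ⟨t, ht, h2 hv, h1 hw⟩
  have hcross_ne : ∀ p : V × V, cross p → p.1 ≠ p.2 := by
    rintro p (⟨hv, hw⟩ | ⟨hv, hw⟩) h
    · exact (Finset.mem_sdiff.1 hw).2 (h ▸ hv)
    · exact (Finset.mem_sdiff.1 hv).2 (h ▸ hw)
  have hsame : ∀ v w : V, sameCluster P' v w ↔ (sameCluster P v w ∧ ¬ cross (v, w)) := by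
    intro v w
    constructor
    · rintro ⟨b, hb, hv, hw⟩
      rcases (hmem b).1 hb with rfl | rfl | ⟨hb', hbt⟩
      · refine ⟨⟨t, ht, h1 hv, h1 hw⟩, ?_⟩
        rintro (⟨hv1, hw2⟩ | ⟨hv2, hw1⟩)
        · exact (Finset.mem_sdiff.1 hw2).2 hw
        · exact (Finset.mem_sdiff.1 hv2).2 hv
      · refine ⟨⟨t, ht, h2 hv, h2 hw⟩, ?_⟩
        rintro (⟨hv1, hw2⟩ | ⟨hv2, hw1⟩)
        · exact (Finset.mem_sdiff.1 hv).2 hv1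
        · exact (Finset.mem_sdiff.1 hw).2 hw1
      · refine ⟨⟨b, hb', hv, hw⟩, ?_⟩
        have hvt : v ∉ t := fun hvt => hbt (P.eq_of_mem_parts hb' ht hv hvt)
        rintro (⟨hv1, _⟩ | ⟨hv2, _⟩)
        · exact hvt (h1 hv1)
        · exact hvt (h2 hv2)
    · rintro ⟨⟨b, hb, hv, hw⟩, hcr⟩
      by_cases hbt : b = t
      · subst hbt
        by_cases hv1 : v ∈ t1
        · by_cases hw1 : w ∈ t1
          · exact ⟨t1, (hmem t1).2 (Or.inl rfl), hv1, hw1⟩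
          · exact absurd (Or.inl ⟨hv1, Finset.mem_sdiff.2 ⟨hw, hw1⟩⟩) hcr
        · have hv2 : v ∈ b \ t1 := Finset.mem_sdiff.2 ⟨hv, hv1⟩
          by_cases hw1 : w ∈ t1
          · exact absurd (Or.inr ⟨hv2, hw1⟩) hcr
          · exact ⟨b \ t1, (hmem _).2 (Or.inr (Or.inl rfl)), hv2,
              Finset.mem_sdiff.2 ⟨hw, hw1⟩⟩
      · exact ⟨b, (hmem b).2 (Or.inr (Or.inr ⟨hb, hbt⟩)), hv, hw⟩
  have ha' : (Finset.univ.offDiag.filter fun p : V × V =>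
          G.Adj p.1 p.2 ∧ ¬ sameCluster P' p.1 p.2)
      = (Finset.univ.offDiag.filter fun p : V × V =>
          G.Adj p.1 p.2 ∧ ¬ sameCluster P p.1 p.2)
        ∪ (Finset.univ.offDiag.filter fun p : V × V => G.Adj p.1 p.2 ∧ cross p) := by
    ext p
    simp only [Finset.mem_union, Finset.mem_filter, hsame]
    have := hcross_same p
    tauto
  have hadisj : Disjoint
      (Finset.univ.offDiag.filter fun p : V × V =>
          G.Adj p.1 p.2 ∧ ¬ sameCluster P p.1 p.2)
      (Finset.univ.offDiag.filter fun p : V × V => G.Adj p.1 p.2 ∧ cross p) := by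
    rw [Finset.disjoint_left]
    intro p hp hp'
    exact (Finset.mem_filter.1 hp).2.2 (hcross_same p (Finset.mem_filter.1 hp').2.2)
  have ha'card : (Finset.univ.offDiag.filter fun p : V × V =>
          G.Adj p.1 p.2 ∧ ¬ sameCluster P' p.1 p.2).card
      = (Finset.univ.offDiag.filter fun p : V × V =>
          G.Adj p.1 p.2 ∧ ¬ sameCluster P p.1 p.2).card
        + (Finset.univ.offDiag.filter fun p : V × V => G.Adj p.1 p.2 ∧ cross p).card := by
    rw [ha', Finset.card_union_of_disjoint hadisj]
  have hnb : (Finset.univ.offDiag.filter fun p : V × V => ¬ G.Adj p.1 p.2 ∧ cross p)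
      ⊆ (Finset.univ.offDiag.filter fun p : V × V =>
          ¬ G.Adj p.1 p.2 ∧ sameCluster P p.1 p.2) := by
    intro p hp
    rw [Finset.mem_filter] at hp ⊢
    exact ⟨hp.1, hp.2.1, hcross_same p hp.2.2⟩
  have hb' : (Finset.univ.offDiag.filter fun p : V × V =>
          ¬ G.Adj p.1 p.2 ∧ sameCluster P' p.1 p.2)
      = (Finset.univ.offDiag.filter fun p : V × V =>
          ¬ G.Adj p.1 p.2 ∧ sameCluster P p.1 p.2)
        \ (Finset.univ.offDiag.filter fun p : V × V => ¬ G.Adj p.1 p.2 ∧ cross p) := by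
    ext p
    simp only [Finset.mem_sdiff, Finset.mem_filter, hsame]
    tauto
  have hb'card : (Finset.univ.offDiag.filter fun p : V × V =>
          ¬ G.Adj p.1 p.2 ∧ sameCluster P' p.1 p.2).card
      = (Finset.univ.offDiag.filter fun p : V × V =>
          ¬ G.Adj p.1 p.2 ∧ sameCluster P p.1 p.2).card
        - (Finset.univ.offDiag.filter fun p : V × V => ¬ G.Adj p.1 p.2 ∧ cross p).card := by
    rw [hb', Finset.card_sdiff_of_subset hnb]
  have hcrossset : (Finset.univ.offDiag.filter fun p : V × V => cross p)
      = (t1 ×ˢ (t \ t1)) ∪ ((t \ t1) ×ˢ t1) := by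
    ext p
    simp only [Finset.mem_union, Finset.mem_filter, Finset.mem_product]
    constructor
    · rintro ⟨-, h⟩
      exact h
    · intro h
      refine ⟨Finset.mem_offDiag.2 ⟨Finset.mem_univ _, Finset.mem_univ _, hcross_ne p h⟩, h⟩
  have hcrosscard : (Finset.univ.offDiag.filter fun p : V × V => cross p).card
      = 2 * (t1.card * (t \ t1).card) := by
    rw [hcrossset, Finset.card_union_of_disjoint, Finset.card_product, Finset.card_product]
    · ring
    · rw [Finset.disjoint_left]
      intro p hp hp'
      exact (Finset.mem_sdiff.1 (Finset.mem_product.1 hp').1).2 (Finset.mem_product.1 hp).1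
  have hensplit : (Finset.univ.offDiag.filter fun p : V × V => cross p)
      = (Finset.univ.offDiag.filter fun p : V × V => G.Adj p.1 p.2 ∧ cross p)
        ∪ (Finset.univ.offDiag.filter fun p : V × V => ¬ G.Adj p.1 p.2 ∧ cross p) := by
    ext p
    simp only [Finset.mem_union, Finset.mem_filter]
    tauto
  have hencard : (Finset.univ.offDiag.filter fun p : V × V => G.Adj p.1 p.2 ∧ cross p).card
      + (Finset.univ.offDiag.filter fun p : V × V => ¬ G.Adj p.1 p.2 ∧ cross p).card
      = 2 * (t1.card * (t \ t1).card) := by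
    rw [← hcrosscard, hensplit, Finset.card_union_of_disjoint]
    rw [Finset.disjoint_left]
    intro p hp hp'
    exact (Finset.mem_filter.1 hp').2.1 (Finset.mem_filter.1 hp).2.1
  have hesub : (Finset.univ.offDiag.filter fun p : V × V => G.Adj p.1 p.2 ∧ cross p)
      ⊆ t.offDiag.filter fun p : V × V => G.Adj p.1 p.2 := by
    intro p hp
    rw [Finset.mem_filter] at hp ⊢
    refine ⟨Finset.mem_offDiag.2 ⟨?_, ?_, hcross_ne p hp.2.2⟩, hp.2.1⟩
    · rcases hp.2.2 with ⟨hv, -⟩ | ⟨hv, -⟩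
      · exact h1 hv
      · exact h2 hv
    · rcases hp.2.2 with ⟨-, hw⟩ | ⟨-, hw⟩
      · exact h2 hw
      · exact h1 hw
  have hevenT : Even (t.offDiag.filter fun p : V × V => G.Adj p.1 p.2).card := by
    apply even_card_of_swap_mem
    · intro p hp
      rw [Finset.mem_filter, Finset.mem_offDiag] at hp ⊢
      exact ⟨⟨hp.1.2.1, hp.1.1, hp.1.2.2.symm⟩, hp.2.symm⟩
    · intro p hp
      exact (Finset.mem_offDiag.1 (Finset.mem_filter.1 hp).1).2.2
  have hecard : (Finset.univ.offDiag.filter fun p : V × V => G.Adj p.1 p.2 ∧ cross p).card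
      ≤ 2 * (tw * t.card) := by
    have hle := Finset.card_le_card hesub
    have hd := hdensity t
    unfold edgesIn at hd
    obtain ⟨k, hk⟩ := hevenT
    have : (t.offDiag.filter fun p : V × V => G.Adj p.1 p.2).card ≤ 2 * (tw * t.card) := by
      omega
    omega
  have helt : (Finset.univ.offDiag.filter fun p : V × V => G.Adj p.1 p.2 ∧ cross p).card
      < (Finset.univ.offDiag.filter fun p : V × V => ¬ G.Adj p.1 p.2 ∧ cross p).card := by
    have := hsize
    set A := tw * t.card
    set B := t1.card * (t \ t1).card
    omega
  refine ⟨P', fun b hb => ?_, ?_⟩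
  · rcases (hmem b).1 hb with rfl | rfl | ⟨hb', -⟩
    · exact Or.inl rfl
    · exact Or.inr (Or.inl rfl)
    · exact Or.inr (Or.inr hb')
  · have h2P := two_mul_clusterCost G P
    have h2P' := two_mul_clusterCost G P'
    have hnle := Finset.card_le_card hnb
    omega

/-- A fair cluster of size larger than the fairlet size can be split into two nonempty fair
clusters, one of size at least a third and the other of size at least a half of the whole. -/
lemma exists_fair_split {κ : ℕ} (χ : V → Fin κ) (c : Fin κ → ℕ) {t : Finset V}
    (hfair : IsFair χ c t) (hc0 : 0 < ∑ i, c i) (hbig : (∑ i, c i) < t.card) :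
    ∃ t1 : Finset V, t1 ⊆ t ∧ IsFair χ c t1 ∧ IsFair χ c (t \ t1) ∧
      t1.Nonempty ∧ (t \ t1).Nonempty ∧
      t.card ≤ 3 * t1.card ∧ t.card ≤ 2 * (t \ t1).card := by
  classical
  obtain ⟨d, hd⟩ := hfair
  have htcard : t.card = d * ∑ i, c i := by
    rw [Finset.card_eq_sum_card_fiberwise (fun x _ => Finset.mem_univ (χ x)), Finset.mul_sum]
    exact Finset.sum_congr rfl fun i _ => hd i
  have hd2 : 2 ≤ d := by
    by_contra h
    push_neg at h
    have hle : d ≤ 1 := by omega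
    have := Nat.mul_le_mul_right (∑ i, c i) hle
    rw [one_mul] at this
    omega
  have hchoose : ∀ i : Fin κ, ∃ s ⊆ t.filter (fun v => χ v = i), s.card = (d / 2) * c i := by
    intro i
    apply Finset.exists_subset_card_eq
    rw [hd i]
    exact Nat.mul_le_mul_right _ (Nat.div_le_self d 2)
  choose s hs hscard using hchoose
  set t1 : Finset V := Finset.univ.biUnion s with ht1
  have hsub : t1 ⊆ t := by
    intro v hv
    obtain ⟨i, -, hi⟩ := Finset.mem_biUnion.1 hv
    exact (Finset.mem_filter.1 (hs i hi)).1
  have hfil1 : ∀ j : Fin κ, (t1.filter fun v => χ v = j) = s j := by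
    intro j
    ext v
    simp only [Finset.mem_filter, ht1, Finset.mem_biUnion]
    constructor
    · rintro ⟨⟨i, -, hi⟩, hj⟩
      have hχ : χ v = i := (Finset.mem_filter.1 (hs i hi)).2
      have : i = j := hχ.symm.trans hj
      exact this ▸ hi
    · intro hv
      exact ⟨⟨j, Finset.mem_univ j, hv⟩, (Finset.mem_filter.1 (hs j hv)).2⟩
  have ht1card : t1.card = (d / 2) * ∑ i, c i := by
    rw [Finset.card_eq_sum_card_fiberwise (fun x _ => Finset.mem_univ (χ x)), Finset.mul_sum]
    exact Finset.sum_congr rfl fun i _ => by rw [hfil1 i, hscard i]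
  have hfil2 : ∀ j : Fin κ, ((t \ t1).filter fun v => χ v = j)
      = (t.filter fun v => χ v = j) \ s j := by
    intro j
    rw [← hfil1 j]
    ext v
    simp only [Finset.mem_filter, Finset.mem_sdiff]
    tauto
  have hf2 : IsFair χ c (t \ t1) := by
    refine ⟨d - d / 2, fun i => ?_⟩
    rw [hfil2 i, Finset.card_sdiff_of_subset (hs i), hd i, hscard i, Nat.sub_mul]
  have ht2card : (t \ t1).card = (d - d / 2) * ∑ i, c i := by
    rw [Finset.card_sdiff_of_subset hsub, htcard, ht1card, ← Nat.sub_mul]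
  refine ⟨t1, hsub, ⟨d / 2, fun i => by rw [hfil1 i, hscard i]⟩, hf2, ?_, ?_, ?_, ?_⟩
  · rw [← Finset.card_pos, ht1card]
    exact Nat.mul_pos (by omega) hc0
  · rw [← Finset.card_pos, ht2card]
    exact Nat.mul_pos (by omega) hc0
  · rw [htcard, ht1card, ← Nat.mul_assoc]
    exact Nat.mul_le_mul_right _ (by omega)
  · rw [htcard, ht2card, ← Nat.mul_assoc]
    exact Nat.mul_le_mul_right _ (by omega)

/-- **Lemma 1.** If every induced subgraph `G[S]` has at most `tw * |S|` edges
and `G` admits a fair clustering, then `G` admits a minimum-cost fair clustering in which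
every cluster has size at most `max (24 * tw) c̃`, where `c̃ = ∑ i, c i` is the fairlet size. -/
theorem exists_min_cost_fair_clustering_with_small_clusters
    {V : Type*} [Fintype V] {κ : ℕ} (G : SimpleGraph V) (tw : ℕ)
    (hdensity : ∀ S : Finset V, edgesIn G S ≤ tw * S.card)
    (χ : V → Fin κ) (c : Fin κ → ℕ) (hc : c ≠ 0)
    (hex : ∃ Q : Finpartition (Finset.univ : Finset V), IsFairClustering χ c Q) :
    ∃ P : Finpartition (Finset.univ : Finset V),
      IsFairClustering χ c P ∧
      (∀ Q : Finpartition (Finset.univ : Finset V),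
        IsFairClustering χ c Q → clusterCost G P ≤ clusterCost G Q) ∧
      ∀ t ∈ P.parts, t.card ≤ max (24 * tw) (∑ i, c i) := by
  classical
  have hc1 : 0 < ∑ i, c i := by
    rcases Function.ne_iff.1 hc with ⟨i, hi⟩
    calc 0 < c i := Nat.pos_of_ne_zero hi
      _ ≤ ∑ i, c i := Finset.single_le_sum (fun _ _ => Nat.zero_le _) (Finset.mem_univ i)
  obtain ⟨Q0, hQ0⟩ := hex
  have hne : ({n : ℕ | ∃ Q : Finpartition (Finset.univ : Finset V),
      IsFairClustering χ c Q ∧ clusterCost G Q = n}).Nonempty := ⟨_, Q0, hQ0, rfl⟩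
  obtain ⟨P, hPfair, hPcost⟩ := Nat.sInf_mem hne
  refine ⟨P, hPfair, ?_, ?_⟩
  · intro Q hQ
    rw [hPcost]
    exact Nat.sInf_le ⟨Q, hQ, rfl⟩
  · intro t htp
    by_contra hbig
    push_neg at hbig
    have hb1 : 24 * tw < t.card := lt_of_le_of_lt (le_max_left _ _) hbig
    have hb2 : ∑ i, c i < t.card := lt_of_le_of_lt (le_max_right _ _) hbig
    obtain ⟨t1, hsub, hf1, hf2, hne1, hne2, h3, h2'⟩ :=
      exists_fair_split χ c (hPfair t htp) hc1 hb2
    have hsize : 2 * (tw * t.card) < t1.card * (t \ t1).card := by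
      have h6 : t.card * t.card ≤ 6 * (t1.card * (t \ t1).card) := by
        calc t.card * t.card ≤ (3 * t1.card) * (2 * (t \ t1).card) := Nat.mul_le_mul h3 h2'
          _ = 6 * (t1.card * (t \ t1).card) := by ring
      have htpos : 0 < t.card := by omega
      have h12lt : 12 * tw < t.card := by omega
      have h12 : 12 * (tw * t.card) < t.card * t.card := by
        calc 12 * (tw * t.card) = (12 * tw) * t.card := by ring
          _ < t.card * t.card := Nat.mul_lt_mul_of_lt_of_le h12lt le_rfl htpos
      have hAB : 12 * (tw * t.card) < 6 * (t1.card * (t \ t1).card) := lt_of_lt_of_le h12 h6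
      set A := tw * t.card
      set B := t1.card * (t \ t1).card
      omega
    obtain ⟨P', hP'parts, hP'lt⟩ := cost_lt_of_split G tw hdensity P htp hsub hne1 hne2 hsize
    have hP'fair : IsFairClustering χ c P' := by
      intro b hb
      rcases hP'parts b hb with rfl | rfl | hb'
      · exact hf1
      · exact hf2
      · exact hPfair b hb'
    have hle := Nat.sInf_le (show clusterCost G P' ∈ {n : ℕ |
        ∃ Q : Finpartition (Finset.univ : Finset V),
          IsFairClustering χ c Q ∧ clusterCost G Q = n} from ⟨P', hP'fair, rfl⟩)
    omega

end
end

section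
/- Let G be a finite simple graph, let tw, c̃, d be natural numbers with c̃ ≥ 1 and d ≥ 2, and let Z be a set of vertices with |Z| = d·c̃ and |Z| > 24·tw such that the induced subgraph G[Z] has at most tw·|Z| edges. Let Z1, Z2 be disjoint sets with Z1 ∪ Z2 = Z, |Z1| = ⌊d/2⌋·c̃ and |Z2| = ⌈d/2⌉·c̃. Then the number of edges of G with one endpoint in Z1 and one in Z2 is strictly less than the number of non-adjacent pairs (v,w) with v ∈ Z1 and w ∈ Z2; equivalently, 2·e(Z1,Z2) < |Z1|·|Z2|. -/
open Finset

open scoped Classical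

noncomputable section

variable {V : Type*}

/-
Every cut edge between `Z1` and `Z2` is an edge of `G[Z]`, so `e(Z1, Z2) ≤ tw·|Z| = tw·d·c̃`.
On the other side `⌊d/2⌋ ≥ d/3` and `⌈d/2⌉ ≥ d/2` once `d ≥ 2`, so
`|Z1|·|Z2| ≥ (d·c̃)²/6`, and `|Z| = d·c̃ > 24·tw` makes this exceed `4·tw·d·c̃ ≥ 2·e(Z1, Z2)`.
-/

theorem edgesBetween_comm (G : SimpleGraph V) (A B : Finset V) :
    edgesBetween G A B = edgesBetween G B A :=
  have := G.symm
  Rel.card_interedges_comm (r := G.Adj) A B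

theorem two_mul_edgesBetween_le_card_adj_offDiag (G : SimpleGraph V) {A B : Finset V}
    (hAB : Disjoint A B) :
    2 * edgesBetween G A B ≤ #((A ∪ B).offDiag.filter fun p : V × V => G.Adj p.1 p.2) := by
  have hdisj : Disjoint (Rel.interedges G.Adj A B) (Rel.interedges G.Adj B A) :=
    disjoint_left.mpr fun p hAB' hBA =>
      disjoint_left.mp hAB (Rel.mem_interedges_iff.mp hAB').1 (Rel.mem_interedges_iff.mp hBA).1
  have hsub : Rel.interedges G.Adj A B ∪ Rel.interedges G.Adj B A ⊆
      (A ∪ B).offDiag.filter fun p : V × V => G.Adj p.1 p.2 := by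
    intro p hp
    simp only [mem_union, Rel.mem_interedges_iff] at hp
    simp only [mem_filter, mem_offDiag, mem_union]
    rcases hp with ⟨hA, hB, hadj⟩ | ⟨hB, hA, hadj⟩
    · exact ⟨⟨.inl hA, .inr hB, hadj.ne⟩, hadj⟩
    · exact ⟨⟨.inr hB, .inl hA, hadj.ne⟩, hadj⟩
  calc 2 * edgesBetween G A B = edgesBetween G A B + edgesBetween G B A := by
        rw [edgesBetween_comm G B A, two_mul]
    _ = #(Rel.interedges G.Adj A B ∪ Rel.interedges G.Adj B A) :=
        (card_union_of_disjoint hdisj).symm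
    _ ≤ _ := card_le_card hsub

theorem edgesBetween_le_edgesIn (G : SimpleGraph V) {A B : Finset V} (hAB : Disjoint A B) :
    edgesBetween G A B ≤ edgesIn G (A ∪ B) := by
  rw [edgesIn, Nat.le_div_iff_mul_le two_pos, mul_comm]
  exact two_mul_edgesBetween_le_card_adj_offDiag G hAB

theorem Nat.mul_self_le_six_mul_div_two_mul_succ_div_two {d : ℕ} (hd : 2 ≤ d) :
    d * d ≤ 6 * (d / 2 * ((d + 1) / 2)) := by
  calc d * d ≤ 3 * (d / 2) * (2 * ((d + 1) / 2)) := Nat.mul_le_mul (by omega) (by omega)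
    _ = 6 * (d / 2 * ((d + 1) / 2)) := by ring

theorem two_mul_edgesBetween_lt_of_balanced_split_general
    {V : Type*} [Fintype V] (G : SimpleGraph V) (tw ctilde d : ℕ)
    (hd : 2 ≤ d)
    (Z Z1 Z2 : Finset V)
    (hZcard : Z.card = d * ctilde) (hZbig : 24 * tw < Z.card)
    (hdens : edgesIn G Z ≤ tw * Z.card)
    (hdisj : Disjoint Z1 Z2) (hunion : Z1 ∪ Z2 = Z)
    (h1 : Z1.card = (d / 2) * ctilde) (h2 : Z2.card = ((d + 1) / 2) * ctilde) :
    2 * edgesBetween G Z1 Z2 < Z1.card * Z2.card := by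
  subst hunion
  rw [hZcard] at hZbig hdens
  have hcut : edgesBetween G Z1 Z2 ≤ tw * (d * ctilde) :=
    (edgesBetween_le_edgesIn G hdisj).trans hdens
  refine Nat.lt_of_mul_lt_mul_left (a := 6) ?_
  calc 6 * (2 * edgesBetween G Z1 Z2) ≤ 24 * tw * (d * ctilde) := by linarith
    _ < d * ctilde * (d * ctilde) := Nat.mul_lt_mul_of_pos_right hZbig (by omega)
    _ = d * d * (ctilde * ctilde) := by ring
    _ ≤ 6 * (d / 2 * ((d + 1) / 2)) * (ctilde * ctilde) :=
      Nat.mul_le_mul_right _ (Nat.mul_self_le_six_mul_div_two_mul_succ_div_two hd)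
    _ = 6 * (Z1.card * Z2.card) := by rw [h1, h2]; ring

/-- For a set `Z` of size `d * c̃ > 24 * tw` (with `c̃ ≥ 1`, `d ≥ 2`) inducing
at most `tw * |Z|` edges, any balanced fair-sized split `Z = Z1 ∪ Z2` with
`|Z1| = ⌊d/2⌋ * c̃`, `|Z2| = ⌈d/2⌉ * c̃` cuts strictly fewer edges than the number of
non-adjacent pairs between `Z1` and `Z2`, i.e. `2 * e(Z1,Z2) < |Z1| * |Z2|`. -/
theorem two_mul_edgesBetween_lt_of_balanced_split
    {V : Type*} [Fintype V] (G : SimpleGraph V) (tw ctilde d : ℕ)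
    (hct : 1 ≤ ctilde) (hd : 2 ≤ d)
    (Z Z1 Z2 : Finset V)
    (hZcard : Z.card = d * ctilde) (hZbig : 24 * tw < Z.card)
    (hdens : edgesIn G Z ≤ tw * Z.card)
    (hdisj : Disjoint Z1 Z2) (hunion : Z1 ∪ Z2 = Z)
    (h1 : Z1.card = (d / 2) * ctilde) (h2 : Z2.card = ((d + 1) / 2) * ctilde) :
    2 * edgesBetween G Z1 Z2 < Z1.card * Z2.card :=
  two_mul_edgesBetween_lt_of_balanced_split_general G tw ctilde d hd Z Z1 Z2 hZcard hZbig hdens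
    hdisj hunion h1 h2

end
end

section
/- Let G be a finite simple graph whose vertices carry a 2-coloring, with fairlet vector (1,1). Let P be a fair clustering of G containing a cluster Z, and let A ⊆ Z be such that G has no edge with one endpoint in A and the other in Z∖A. Let r and b be the numbers of red and blue vertices in A, assume r ≥ b, and let R ⊆ A be a set of exactly r − b red vertices. Set Z1 = A∖R and Z2 = Z∖Z1 and assume Z1 and Z2 are nonempty. Then the clustering P' obtained from P by replacing Z with the two clusters Z1 and Z2 is a fair clustering and cost(P') ≤ cost(P). -/
open Finset

open scoped Classical

noncomputable section

variable {V : Type*}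

/-- For the 2-coloring `χ` and the fairlet vector `(1,1)`, a set is fair iff it contains
equally many vertices of color `0` (red) and of color `1` (blue). -/
def IsBalanced (χ : V → Fin 2) (W : Finset V) : Prop :=
  (W.filter fun v => χ v = 0).card = (W.filter fun v => χ v = 1).card

/-- A clustering is fair (w.r.t. the fairlet vector `(1,1)`) if each cluster is balanced. -/
def IsBalancedClustering [Fintype V] (χ : V → Fin 2)
    (P : Finpartition (Finset.univ : Finset V)) : Prop :=
  ∀ t ∈ P.parts, IsBalanced χ t

lemma even_card_filter_swap {V : Type*} [Fintype V] (Q : V × V → Prop)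
    [DecidablePred Q] (hQ : ∀ p : V × V, Q p → Q p.swap) :
    Even (((Finset.univ : Finset V).offDiag.filter Q).card) := by
  set s := ((Finset.univ : Finset V).offDiag.filter Q) with hs
  have g_mem : ∀ p ∈ s, p.swap ∈ s := by
    intro p hp
    rw [hs, mem_filter, mem_offDiag] at hp ⊢
    exact ⟨⟨mem_univ _, mem_univ _, Ne.symm hp.1.2.2⟩, hQ p hp.2⟩
  have h0 : ∑ _p ∈ s, (1 : ZMod 2) = 0 := by
    refine Finset.sum_involution (fun p _ => p.swap) (fun a _ => by decide)
      (fun a ha _ hc => ?_) g_mem (fun a _ => Prod.swap_swap a)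
    have hne : a.1 ≠ a.2 := (Finset.mem_offDiag.1 (Finset.mem_filter.1 ha).1).2.2
    exact hne (congrArg Prod.fst hc).symm
  have hcard : ((s.card : ℕ) : ZMod 2) = 0 := by simpa using h0
  exact even_iff_two_dvd.mpr ((ZMod.natCast_eq_zero_iff s.card 2).1 hcard)

/-- The exchange step in the proof of Lemma 2: splitting a cluster `Z` of a
fair clustering `P` along a union `A` of connected components (no edges between `A` and
`Z \ A`), after removing a set `R` of `r - b` excess red vertices from `A`, yields a fair
clustering `P'` (replacing `Z` by `Z1 = A \ R` and `Z2 = Z \ Z1`) of cost at most that of `P`. -/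
theorem split_along_component_fair_and_cost_le
    {V : Type*} [Fintype V] (G : SimpleGraph V) (χ : V → Fin 2)
    (P P' : Finpartition (Finset.univ : Finset V))
    (hPfair : IsBalancedClustering χ P)
    (Z : Finset V) (hZ : Z ∈ P.parts)
    (A : Finset V) (hA : A ⊆ Z)
    (hsep : ∀ v ∈ A, ∀ w ∈ Z \ A, ¬ G.Adj v w)
    (r b : ℕ)
    (hr : r = (A.filter fun v => χ v = 0).card)
    (hb : b = (A.filter fun v => χ v = 1).card)
    (hrb : b ≤ r)
    (R : Finset V) (hRA : R ⊆ A) (hRred : ∀ v ∈ R, χ v = 0) (hRcard : R.card = r - b)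
    (Z1 Z2 : Finset V) (hZ1 : Z1 = A \ R) (hZ2 : Z2 = Z \ Z1)
    (h1 : Z1.Nonempty) (h2 : Z2.Nonempty)
    (hP' : P'.parts = insert Z1 (insert Z2 (P.parts.erase Z))) :
    IsBalancedClustering χ P' ∧ clusterCost G P' ≤ clusterCost G P := by
  classical
  -- basic set facts
  have hZ1A : Z1 ⊆ A := hZ1 ▸ sdiff_subset
  have hZ1Z : Z1 ⊆ Z := hZ1A.trans hA
  have hZ2Z : Z2 ⊆ Z := hZ2 ▸ sdiff_subset
  have hdisj12 : Disjoint Z1 Z2 := hZ2 ▸ disjoint_sdiff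
  have hZmem : ∀ v ∈ Z, v ∈ Z1 ∨ v ∈ Z2 := by
    intro v hv
    by_cases h : v ∈ Z1
    · exact Or.inl h
    · exact Or.inr (hZ2 ▸ mem_sdiff.2 ⟨hv, h⟩)
  have hdisjZ : ∀ t ∈ P.parts, t ≠ Z → Disjoint t Z := by
    intro t ht hne
    exact P.disjoint ht hZ hne
  -- color counts
  have hZbal : IsBalanced χ Z := hPfair Z hZ
  have hRsub : R ⊆ A.filter fun v => χ v = 0 := fun v hv => mem_filter.2 ⟨hRA hv, hRred v hv⟩
  have hfZ1_0 : (Z1.filter fun v => χ v = 0) = (A.filter fun v => χ v = 0) \ R := by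
    rw [hZ1]; ext v
    simp only [mem_filter, mem_sdiff]
    tauto
  have hZ1red : (Z1.filter fun v => χ v = 0).card = b := by
    rw [hfZ1_0, card_sdiff_of_subset hRsub, hRcard, ← hr]
    omega
  have hfZ1_1 : (Z1.filter fun v => χ v = 1) = A.filter fun v => χ v = 1 := by
    rw [hZ1]; ext v
    simp only [mem_filter, mem_sdiff]
    constructor
    · tauto
    · intro hv
      refine ⟨⟨hv.1, fun hvR => ?_⟩, hv.2⟩
      rw [hRred v hvR] at hv
      exact absurd hv.2 (by decide)
  have hZ1blue : (Z1.filter fun v => χ v = 1).card = b := by rw [hfZ1_1, ← hb]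
  have hZ1bal : IsBalanced χ Z1 := hZ1red.trans hZ1blue.symm
  have hfZ2 : ∀ c : Fin 2, (Z2.filter fun v => χ v = c) =
      (Z.filter fun v => χ v = c) \ (Z1.filter fun v => χ v = c) := by
    intro c; rw [hZ2]; ext v
    simp only [mem_filter, mem_sdiff]
    constructor
    · tauto
    · intro hv
      exact ⟨⟨hv.1.1, fun h => hv.2 ⟨h, hv.1.2⟩⟩, hv.1.2⟩
  have hsub0 : (Z1.filter fun v => χ v = (0 : Fin 2)) ⊆ Z.filter fun v => χ v = 0 :=
    filter_subset_filter _ hZ1Z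
  have hsub1 : (Z1.filter fun v => χ v = (1 : Fin 2)) ⊆ Z.filter fun v => χ v = 1 :=
    filter_subset_filter _ hZ1Z
  have hZ2red : (Z2.filter fun v => χ v = 0).card = (Z.filter fun v => χ v = 0).card - b := by
    rw [hfZ2 0, card_sdiff_of_subset hsub0, hZ1red]
  have hZ2blue : (Z2.filter fun v => χ v = 1).card = (Z.filter fun v => χ v = 1).card - b := by
    rw [hfZ2 1, card_sdiff_of_subset hsub1, hZ1blue]
  have hZ2bal : IsBalanced χ Z2 := by
    rw [IsBalanced, hZ2red, hZ2blue, hZbal]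
  -- fairness of P'
  have hfair' : IsBalancedClustering χ P' := by
    intro t ht
    rw [hP'] at ht
    rcases mem_insert.1 ht with rfl | ht
    · exact hZ1bal
    rcases mem_insert.1 ht with rfl | ht
    · exact hZ2bal
    · exact hPfair t (mem_of_mem_erase ht)
  refine ⟨hfair', ?_⟩
  -- characterization of sameCluster P'
  have hsplit_same : ∀ v w : V, ((v ∈ Z1 ∧ w ∈ Z2) ∨ (v ∈ Z2 ∧ w ∈ Z1)) → sameCluster P v w := by
    rintro v w (⟨hv, hw⟩ | ⟨hv, hw⟩)
    · exact ⟨Z, hZ, hZ1Z hv, hZ2Z hw⟩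
    · exact ⟨Z, hZ, hZ2Z hv, hZ1Z hw⟩
  have hsame' : ∀ v w : V, sameCluster P' v w ↔
      (sameCluster P v w ∧ ¬ ((v ∈ Z1 ∧ w ∈ Z2) ∨ (v ∈ Z2 ∧ w ∈ Z1))) := by
    intro v w
    constructor
    · rintro ⟨t, ht, hv, hw⟩
      rw [hP'] at ht
      rcases mem_insert.1 ht with rfl | ht
      · refine ⟨⟨Z, hZ, hZ1Z hv, hZ1Z hw⟩, ?_⟩
        rintro (⟨h1', h2'⟩ | ⟨h1', h2'⟩)
        · exact disjoint_left.mp hdisj12 hw h2'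
        · exact disjoint_left.mp hdisj12 hv h1'
      rcases mem_insert.1 ht with rfl | ht
      · refine ⟨⟨Z, hZ, hZ2Z hv, hZ2Z hw⟩, ?_⟩
        rintro (⟨h1', h2'⟩ | ⟨h1', h2'⟩)
        · exact disjoint_left.mp hdisj12 h1' hv
        · exact disjoint_left.mp hdisj12 h2' hw
      · have htp : t ∈ P.parts := mem_of_mem_erase ht
        have hne : t ≠ Z := ne_of_mem_erase ht
        refine ⟨⟨t, htp, hv, hw⟩, ?_⟩
        have hvZ : v ∉ Z := disjoint_left.mp (hdisjZ t htp hne) hv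
        rintro (⟨h1', _⟩ | ⟨h1', _⟩)
        · exact hvZ (hZ1Z h1')
        · exact hvZ (hZ2Z h1')
    · rintro ⟨⟨t, ht, hv, hw⟩, hns⟩
      by_cases hne : t = Z
      · subst hne
        rcases hZmem v hv with h1' | h1' <;> rcases hZmem w hw with h2' | h2'
        · exact ⟨Z1, by rw [hP']; exact mem_insert_self _ _, h1', h2'⟩
        · exact absurd (Or.inl ⟨h1', h2'⟩) hns
        · exact absurd (Or.inr ⟨h1', h2'⟩) hns
        · exact ⟨Z2, by rw [hP']; exact mem_insert_of_mem (mem_insert_self _ _), h1', h2'⟩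
      · exact ⟨t, by
          rw [hP']
          exact mem_insert_of_mem (mem_insert_of_mem (mem_erase.2 ⟨hne, ht⟩)), hv, hw⟩
  -- filter decompositions
  have E1 : ((Finset.univ : Finset V).offDiag.filter
        fun p : V × V => G.Adj p.1 p.2 ∧ ¬ sameCluster P' p.1 p.2)
      = ((Finset.univ : Finset V).offDiag.filter
          fun p : V × V => G.Adj p.1 p.2 ∧ ¬ sameCluster P p.1 p.2)
        ∪ ((Finset.univ : Finset V).offDiag.filter
          fun p : V × V => G.Adj p.1 p.2 ∧
            ((p.1 ∈ Z1 ∧ p.2 ∈ Z2) ∨ (p.1 ∈ Z2 ∧ p.2 ∈ Z1))) := by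
    ext p
    simp only [mem_union, mem_filter]
    constructor
    · rintro ⟨hd, hadj, hns⟩
      by_cases hsp : (p.1 ∈ Z1 ∧ p.2 ∈ Z2) ∨ (p.1 ∈ Z2 ∧ p.2 ∈ Z1)
      · exact Or.inr ⟨hd, hadj, hsp⟩
      · exact Or.inl ⟨hd, hadj, fun hs => hns ((hsame' p.1 p.2).2 ⟨hs, hsp⟩)⟩
    · rintro (⟨hd, hadj, hns⟩ | ⟨hd, hadj, hsp⟩)
      · exact ⟨hd, hadj, fun hs => hns ((hsame' p.1 p.2).1 hs).1⟩
      · exact ⟨hd, hadj, fun hs => ((hsame' p.1 p.2).1 hs).2 hsp⟩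
  have E1disj : Disjoint
      ((Finset.univ : Finset V).offDiag.filter
          fun p : V × V => G.Adj p.1 p.2 ∧ ¬ sameCluster P p.1 p.2)
      ((Finset.univ : Finset V).offDiag.filter
          fun p : V × V => G.Adj p.1 p.2 ∧
            ((p.1 ∈ Z1 ∧ p.2 ∈ Z2) ∨ (p.1 ∈ Z2 ∧ p.2 ∈ Z1))) := by
    rw [Finset.disjoint_left]
    intro p hp1 hp2
    rw [mem_filter] at hp1 hp2
    exact hp1.2.2 (hsplit_same p.1 p.2 hp2.2.2)
  have E2 : ((Finset.univ : Finset V).offDiag.filter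
        fun p : V × V => ¬ G.Adj p.1 p.2 ∧ sameCluster P p.1 p.2)
      = ((Finset.univ : Finset V).offDiag.filter
          fun p : V × V => ¬ G.Adj p.1 p.2 ∧ sameCluster P' p.1 p.2)
        ∪ ((Finset.univ : Finset V).offDiag.filter
          fun p : V × V => ¬ G.Adj p.1 p.2 ∧
            ((p.1 ∈ Z1 ∧ p.2 ∈ Z2) ∨ (p.1 ∈ Z2 ∧ p.2 ∈ Z1))) := by
    ext p
    simp only [mem_union, mem_filter]
    constructor
    · rintro ⟨hd, hadj, hs⟩
      by_cases hsp : (p.1 ∈ Z1 ∧ p.2 ∈ Z2) ∨ (p.1 ∈ Z2 ∧ p.2 ∈ Z1)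
      · exact Or.inr ⟨hd, hadj, hsp⟩
      · exact Or.inl ⟨hd, hadj, (hsame' p.1 p.2).2 ⟨hs, hsp⟩⟩
    · rintro (⟨hd, hadj, hs⟩ | ⟨hd, hadj, hsp⟩)
      · exact ⟨hd, hadj, ((hsame' p.1 p.2).1 hs).1⟩
      · exact ⟨hd, hadj, hsplit_same p.1 p.2 hsp⟩
  have E2disj : Disjoint
      ((Finset.univ : Finset V).offDiag.filter
          fun p : V × V => ¬ G.Adj p.1 p.2 ∧ sameCluster P' p.1 p.2)
      ((Finset.univ : Finset V).offDiag.filter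
          fun p : V × V => ¬ G.Adj p.1 p.2 ∧
            ((p.1 ∈ Z1 ∧ p.2 ∈ Z2) ∨ (p.1 ∈ Z2 ∧ p.2 ∈ Z1))) := by
    rw [Finset.disjoint_left]
    intro p hp1 hp2
    rw [mem_filter] at hp1 hp2
    exact (((hsame' p.1 p.2).1 hp1.2.2).2) hp2.2.2
  -- adjacent split pairs land in (Z1 ×ˢ R) ∪ (R ×ˢ Z1)
  have hkey : ∀ v w : V, v ∈ Z1 → w ∈ Z2 → G.Adj v w → w ∈ R := by
    intro v w hv hw hadj
    have hwZ : w ∈ Z := hZ2Z hw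
    have hwA : w ∈ A := by
      by_contra hwA
      exact hsep v (hZ1A hv) w (mem_sdiff.2 ⟨hwZ, hwA⟩) hadj
    have hwZ1 : w ∉ Z1 := disjoint_right.mp hdisj12 hw
    rw [hZ1, mem_sdiff] at hwZ1
    by_contra hwR
    exact hwZ1 ⟨hwA, hwR⟩
  have hsubA : ((Finset.univ : Finset V).offDiag.filter
        fun p : V × V => G.Adj p.1 p.2 ∧
          ((p.1 ∈ Z1 ∧ p.2 ∈ Z2) ∨ (p.1 ∈ Z2 ∧ p.2 ∈ Z1)))
      ⊆ (Z1 ×ˢ R) ∪ (R ×ˢ Z1) := by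
    intro p hp
    rw [mem_filter] at hp
    obtain ⟨_, hadj, hsp⟩ := hp
    rcases hsp with ⟨hp1, hp2⟩ | ⟨hp1, hp2⟩
    · exact mem_union_left _ (mem_product.2 ⟨hp1, hkey p.1 p.2 hp1 hp2 hadj⟩)
    · exact mem_union_right _ (mem_product.2 ⟨hkey p.2 p.1 hp2 hp1 hadj.symm, hp2⟩)
  have hcardA : ((Finset.univ : Finset V).offDiag.filter
        fun p : V × V => G.Adj p.1 p.2 ∧
          ((p.1 ∈ Z1 ∧ p.2 ∈ Z2) ∨ (p.1 ∈ Z2 ∧ p.2 ∈ Z1))).card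
      ≤ Z1.card * R.card + R.card * Z1.card := by
    refine (card_le_card hsubA).trans (le_of_le_of_eq (card_union_le _ _) ?_)
    rw [card_product, card_product]
  -- non-adjacent split pairs contain (Z1 ×ˢ (Z \ A)) ∪ ((Z \ A) ×ˢ Z1)
  have hZAsubZ2 : Z \ A ⊆ Z2 := by
    intro w hw
    rw [mem_sdiff] at hw
    rw [hZ2, mem_sdiff]
    exact ⟨hw.1, fun h => hw.2 (hZ1A h)⟩
  have hsubN : (Z1 ×ˢ (Z \ A)) ∪ ((Z \ A) ×ˢ Z1)
      ⊆ ((Finset.univ : Finset V).offDiag.filter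
        fun p : V × V => ¬ G.Adj p.1 p.2 ∧
          ((p.1 ∈ Z1 ∧ p.2 ∈ Z2) ∨ (p.1 ∈ Z2 ∧ p.2 ∈ Z1))) := by
    intro p hp
    rcases mem_union.1 hp with hp | hp <;> rw [mem_product] at hp
    · obtain ⟨hp1, hp2⟩ := hp
      have hne : p.1 ≠ p.2 := by
        intro h
        exact (mem_sdiff.1 hp2).2 (hZ1A (h ▸ hp1))
      rw [mem_filter, mem_offDiag]
      exact ⟨⟨mem_univ _, mem_univ _, hne⟩, hsep p.1 (hZ1A hp1) p.2 hp2,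
        Or.inl ⟨hp1, hZAsubZ2 hp2⟩⟩
    · obtain ⟨hp1, hp2⟩ := hp
      have hne : p.1 ≠ p.2 := by
        intro h
        exact (mem_sdiff.1 hp1).2 (hZ1A (h ▸ hp2))
      rw [mem_filter, mem_offDiag]
      exact ⟨⟨mem_univ _, mem_univ _, hne⟩,
        fun hadj => hsep p.2 (hZ1A hp2) p.1 hp1 hadj.symm,
        Or.inr ⟨hZAsubZ2 hp1, hp2⟩⟩
  have hdisjN : Disjoint (Z1 ×ˢ (Z \ A)) ((Z \ A) ×ˢ Z1) := by
    rw [Finset.disjoint_left]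
    intro p hp1 hp2
    rw [mem_product] at hp1 hp2
    exact (mem_sdiff.1 hp2.1).2 (hZ1A hp1.1)
  have hcardN : Z1.card * (Z \ A).card + (Z \ A).card * Z1.card
      ≤ ((Finset.univ : Finset V).offDiag.filter
        fun p : V × V => ¬ G.Adj p.1 p.2 ∧
          ((p.1 ∈ Z1 ∧ p.2 ∈ Z2) ∨ (p.1 ∈ Z2 ∧ p.2 ∈ Z1))).card := by
    calc Z1.card * (Z \ A).card + (Z \ A).card * Z1.card
        = ((Z1 ×ˢ (Z \ A)) ∪ ((Z \ A) ×ˢ Z1)).card := by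
          rw [card_union_of_disjoint hdisjN, card_product, card_product]
      _ ≤ _ := card_le_card hsubN
  -- |R| ≤ |Z \ A|
  have hRle : R.card ≤ (Z \ A).card := by
    have hfb : ((Z \ A).filter fun v => χ v = 1)
        = (Z.filter fun v => χ v = 1) \ (A.filter fun v => χ v = 1) := by
      ext v
      simp only [mem_filter, mem_sdiff]
      tauto
    have hsubb : (A.filter fun v => χ v = (1 : Fin 2)) ⊆ Z.filter fun v => χ v = 1 :=
      filter_subset_filter _ hA
    have hsubr : (A.filter fun v => χ v = (0 : Fin 2)) ⊆ Z.filter fun v => χ v = 0 :=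
      filter_subset_filter _ hA
    have hcb : ((Z \ A).filter fun v => χ v = 1).card
        = (Z.filter fun v => χ v = 1).card - b := by
      rw [hfb, card_sdiff_of_subset hsubb, ← hb]
    have h3 : ((Z \ A).filter fun v => χ v = 1).card ≤ (Z \ A).card :=
      card_filter_le _ _
    have h4 : r ≤ (Z.filter fun v => χ v = 0).card := hr ▸ card_le_card hsubr
    have h5 : b ≤ (Z.filter fun v => χ v = 1).card := hb ▸ card_le_card hsubb
    have h6 := hZbal
    rw [IsBalanced] at h6
    omega
  have hsAsN : ((Finset.univ : Finset V).offDiag.filter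
        fun p : V × V => G.Adj p.1 p.2 ∧
          ((p.1 ∈ Z1 ∧ p.2 ∈ Z2) ∨ (p.1 ∈ Z2 ∧ p.2 ∈ Z1))).card
      ≤ ((Finset.univ : Finset V).offDiag.filter
        fun p : V × V => ¬ G.Adj p.1 p.2 ∧
          ((p.1 ∈ Z1 ∧ p.2 ∈ Z2) ∨ (p.1 ∈ Z2 ∧ p.2 ∈ Z1))).card := by
    refine hcardA.trans (le_trans ?_ hcardN)
    have := Nat.mul_le_mul_left Z1.card hRle
    have := Nat.mul_le_mul_right Z1.card hRle
    omega
  -- evenness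
  have hsameSymm : ∀ (Q : Finpartition (Finset.univ : Finset V)) (v w : V),
      sameCluster Q v w → sameCluster Q w v := by
    rintro Q v w ⟨t, ht, hv, hw⟩
    exact ⟨t, ht, hw, hv⟩
  have evA : Even (((Finset.univ : Finset V).offDiag.filter
      fun p : V × V => G.Adj p.1 p.2 ∧ ¬ sameCluster P p.1 p.2).card) := by
    refine even_card_filter_swap _ ?_
    rintro ⟨v, w⟩ ⟨h1', h2'⟩
    exact ⟨h1'.symm, fun h => h2' (hsameSymm P w v h)⟩
  have evC' : Even (((Finset.univ : Finset V).offDiag.filter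
      fun p : V × V => ¬ G.Adj p.1 p.2 ∧ sameCluster P' p.1 p.2).card) := by
    refine even_card_filter_swap _ ?_
    rintro ⟨v, w⟩ ⟨h1', h2'⟩
    exact ⟨fun h => h1' h.symm, hsameSymm P' v w h2'⟩
  have evSA : Even (((Finset.univ : Finset V).offDiag.filter
      fun p : V × V => G.Adj p.1 p.2 ∧
        ((p.1 ∈ Z1 ∧ p.2 ∈ Z2) ∨ (p.1 ∈ Z2 ∧ p.2 ∈ Z1))).card) := by
    refine even_card_filter_swap _ ?_
    rintro ⟨v, w⟩ ⟨h1', h2'⟩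
    exact ⟨h1'.symm, h2'.symm.imp And.symm And.symm⟩
  have evSN : Even (((Finset.univ : Finset V).offDiag.filter
      fun p : V × V => ¬ G.Adj p.1 p.2 ∧
        ((p.1 ∈ Z1 ∧ p.2 ∈ Z2) ∨ (p.1 ∈ Z2 ∧ p.2 ∈ Z1))).card) := by
    refine even_card_filter_swap _ ?_
    rintro ⟨v, w⟩ ⟨h1', h2'⟩
    exact ⟨fun h => h1' h.symm, h2'.symm.imp And.symm And.symm⟩
  -- final arithmetic
  have e1 : ((Finset.univ : Finset V).offDiag.filter
        fun p : V × V => G.Adj p.1 p.2 ∧ ¬ sameCluster P' p.1 p.2).card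
      = ((Finset.univ : Finset V).offDiag.filter
          fun p : V × V => G.Adj p.1 p.2 ∧ ¬ sameCluster P p.1 p.2).card
        + ((Finset.univ : Finset V).offDiag.filter
          fun p : V × V => G.Adj p.1 p.2 ∧
            ((p.1 ∈ Z1 ∧ p.2 ∈ Z2) ∨ (p.1 ∈ Z2 ∧ p.2 ∈ Z1))).card := by
    rw [E1, card_union_of_disjoint E1disj]
  have e2 : ((Finset.univ : Finset V).offDiag.filter
        fun p : V × V => ¬ G.Adj p.1 p.2 ∧ sameCluster P p.1 p.2).card
      = ((Finset.univ : Finset V).offDiag.filter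
          fun p : V × V => ¬ G.Adj p.1 p.2 ∧ sameCluster P' p.1 p.2).card
        + ((Finset.univ : Finset V).offDiag.filter
          fun p : V × V => ¬ G.Adj p.1 p.2 ∧
            ((p.1 ∈ Z1 ∧ p.2 ∈ Z2) ∨ (p.1 ∈ Z2 ∧ p.2 ∈ Z1))).card := by
    rw [E2, card_union_of_disjoint E2disj]
  rw [clusterCost, clusterCost, e1, e2]
  obtain ⟨x, hx⟩ := evA
  obtain ⟨y, hy⟩ := evC'
  obtain ⟨u, hu⟩ := evSA
  obtain ⟨z, hz⟩ := evSN
  omega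

end
end

section
/- Let k be a natural number and let G be a finite simple graph with colored vertices that has a vertex cover M of size at most k. If G admits at least one fair clustering, then G admits a fair clustering P whose cost is minimum among all fair clusterings of G and in which every cluster has size at most max(24·k, c̃), where c̃ is the fairlet size. -/
open Finset

open scoped Classical

noncomputable section

variable {V : Type*}

lemma even_card_of_involution {α : Type*} [DecidableEq α] (s : Finset α) (f : α → α)
    (hmem : ∀ a ∈ s, f a ∈ s) (hinv : ∀ a ∈ s, f (f a) = a) (hne : ∀ a ∈ s, f a ≠ a) :
    Even s.card := by
  induction s using Finset.strongInduction with
  | _ s ih =>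
    rcases s.eq_empty_or_nonempty with rfl | ⟨a, ha⟩
    · simp
    · have hfa : f a ∈ s := hmem a ha
      have hne' : f a ≠ a := hne a ha
      set s' := s \ {a, f a} with hs'
      have hsub : s' ⊂ s := by
        refine Finset.ssubset_iff_of_subset (Finset.sdiff_subset) |>.2 ⟨a, ha, by simp [hs']⟩
      have hcard : s.card = s'.card + 2 := by
        have hss : ({a, f a} : Finset α) ⊆ s := by
          intro x hx; simp at hx; rcases hx with rfl | rfl <;> assumption
        rw [hs', Finset.card_sdiff_of_subset hss, Finset.card_pair (Ne.symm hne')]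
        have h2 : 2 ≤ s.card := by
          calc 2 = ({a, f a} : Finset α).card := (Finset.card_pair (Ne.symm hne')).symm
          _ ≤ s.card := Finset.card_le_card hss
        omega
      have hs'mem : ∀ x ∈ s', f x ∈ s' := by
        intro x hx
        simp only [hs', Finset.mem_sdiff, Finset.mem_insert, Finset.mem_singleton] at hx ⊢
        obtain ⟨hxs, hx2⟩ := hx
        push_neg at hx2
        refine ⟨hmem x hxs, ?_⟩
        rintro (h | h)
        · exact hx2.2 (by rw [← hinv x hxs, h])
        · exact hx2.1 (by rw [← hinv x hxs, h, hinv a ha])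
      obtain ⟨r, hr⟩ := ih s' hsub hs'mem (fun x hx => hinv x (Finset.mem_sdiff.1 hx).1)
        (fun x hx => hne x (Finset.mem_sdiff.1 hx).1)
      exact ⟨r + 1, by omega⟩

lemma even_card_symm_filter [Fintype V] (p : V → V → Prop)
    (hp : ∀ v w, p v w → p w v) :
    Even ((Finset.univ.offDiag).filter fun q : V × V => p q.1 q.2).card := by
  refine even_card_of_involution _ Prod.swap ?_ ?_ ?_
  · rintro ⟨v, w⟩ hq
    simp only [Finset.mem_filter, Finset.mem_offDiag] at hq ⊢
    exact ⟨⟨Finset.mem_univ _, Finset.mem_univ _, hq.1.2.2.symm⟩, hp _ _ hq.2⟩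
  · intro a _; simp
  · rintro ⟨v, w⟩ hq
    simp only [Finset.mem_filter, Finset.mem_offDiag] at hq
    simp only [Prod.ext_iff, Prod.swap]
    rintro ⟨rfl, -⟩
    exact hq.1.2.2 rfl

section Split
variable [Fintype V] (P : Finpartition (Finset.univ : Finset V)) (t A : Finset V)
  (ht : t ∈ P.parts) (hA : A ⊆ t) (hA0 : A.Nonempty) (hB0 : (t \ A).Nonempty)

noncomputable def splitPart : Finpartition (Finset.univ : Finset V) where
  parts := insert A (insert (t \ A) (P.parts.erase t))
  supIndep := by
    rw [Finset.supIndep_iff_pairwiseDisjoint]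
    have hAB : Disjoint A (t \ A) := Finset.disjoint_sdiff
    have hts : ∀ s ∈ P.parts.erase t, Disjoint t s := fun s hs =>
      P.disjoint ht (Finset.mem_of_mem_erase hs) (Ne.symm (Finset.ne_of_mem_erase hs))
    intro x hx y hy hxy
    simp only [Finset.coe_insert, Set.mem_insert_iff, Finset.mem_coe,
      Finset.mem_erase] at hx hy
    rcases hx with rfl | rfl | hx <;> rcases hy with rfl | rfl | hy
    · exact absurd rfl hxy
    · exact hAB
    · exact (hts _ (Finset.mem_erase.2 hy)).mono_left hA
    · exact hAB.symm
    · exact absurd rfl hxy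
    · exact (hts _ (Finset.mem_erase.2 hy)).mono_left Finset.sdiff_subset
    · exact ((hts _ (Finset.mem_erase.2 hx)).mono_left hA).symm
    · exact ((hts _ (Finset.mem_erase.2 hx)).mono_left Finset.sdiff_subset).symm
    · exact P.disjoint hx.2 hy.2 hxy
  sup_parts := by
    rw [Finset.sup_insert, Finset.sup_insert, ← sup_assoc]
    have h1 : (id A : Finset V) ⊔ id (t \ A) = t := by
      simpa using Finset.union_sdiff_of_subset hA
    rw [h1]
    have := P.sup_parts
    rw [← Finset.insert_erase ht, Finset.sup_insert] at this
    simpa using this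
  bot_notMem := by
    simp only [Finset.bot_eq_empty, Finset.mem_insert, Finset.mem_erase]
    push_neg
    refine ⟨Ne.symm hA0.ne_empty, Ne.symm hB0.ne_empty, fun _ => ?_⟩
    exact fun h => P.bot_notMem (by simpa using h)

lemma splitPart_parts :
    (splitPart P t A ht hA hA0 hB0).parts = insert A (insert (t \ A) (P.parts.erase t)) := rfl

lemma sameCluster_splitPart (v w : V) :
    sameCluster (splitPart P t A ht hA hA0 hB0) v w ↔
      sameCluster P v w ∧ ¬ ((v ∈ A ∧ w ∈ t \ A) ∨ (v ∈ t \ A ∧ w ∈ A)) := by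
  have hAB : Disjoint A (t \ A) := Finset.disjoint_sdiff
  have hts : ∀ s ∈ P.parts.erase t, Disjoint t s := fun s hs =>
    P.disjoint ht (Finset.mem_of_mem_erase hs) (Ne.symm (Finset.ne_of_mem_erase hs))
  constructor
  · rintro ⟨s, hs, hv, hw⟩
    rw [splitPart_parts] at hs
    simp only [Finset.mem_insert] at hs
    rcases hs with rfl | rfl | hs
    · refine ⟨⟨t, ht, hA hv, hA hw⟩, ?_⟩
      rintro (⟨-, h⟩ | ⟨h, -⟩)
      · exact (Finset.disjoint_left.1 hAB) hw h
      · exact (Finset.disjoint_left.1 hAB) hv h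
    · refine ⟨⟨t, ht, (Finset.mem_sdiff.1 hv).1, (Finset.mem_sdiff.1 hw).1⟩, ?_⟩
      rintro (⟨h, -⟩ | ⟨-, h⟩)
      · exact (Finset.disjoint_left.1 hAB) h hv
      · exact (Finset.disjoint_left.1 hAB) h hw
    · refine ⟨⟨s, Finset.mem_of_mem_erase hs, hv, hw⟩, ?_⟩
      rintro (⟨h, -⟩ | ⟨h, -⟩)
      · exact (Finset.disjoint_left.1 (hts s hs)) (hA h) hv
      · exact (Finset.disjoint_left.1 (hts s hs)) (Finset.sdiff_subset h) hv
  · rintro ⟨⟨s, hs, hv, hw⟩, hcross⟩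
    by_cases hst : s = t
    · subst hst
      by_cases hvA : v ∈ A <;> by_cases hwA : w ∈ A
      · exact ⟨A, Finset.mem_insert_self _ _, hvA, hwA⟩
      · exact absurd (Or.inl ⟨hvA, Finset.mem_sdiff.2 ⟨hw, hwA⟩⟩) hcross
      · exact absurd (Or.inr ⟨Finset.mem_sdiff.2 ⟨hv, hvA⟩, hwA⟩) hcross
      · exact ⟨s \ A, Finset.mem_insert.2 (Or.inr (Finset.mem_insert_self _ _)),
          Finset.mem_sdiff.2 ⟨hv, hvA⟩, Finset.mem_sdiff.2 ⟨hw, hwA⟩⟩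
    · exact ⟨s, Finset.mem_insert.2 (Or.inr (Finset.mem_insert.2 (Or.inr (Finset.mem_erase.2 ⟨hst, hs⟩)))), hv, hw⟩
end Split

lemma sameCluster_symm [Fintype V] {P : Finpartition (Finset.univ : Finset V)} {v w : V}
    (h : sameCluster P v w) : sameCluster P w v := by
  obtain ⟨s, hs, hv, hw⟩ := h; exact ⟨s, hs, hw, hv⟩

section Cost
variable [Fintype V] (P P' : Finpartition (Finset.univ : Finset V))

/-- abstract cost comparison lemma -/
lemma clusterCost_le_of_split (G : SimpleGraph V) (cross : V → V → Prop)
    (hsymm : ∀ v w, cross v w → cross w v)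
    (hcs : ∀ v w, cross v w → sameCluster P v w)
    (hsame : ∀ v w, sameCluster P' v w ↔ sameCluster P v w ∧ ¬ cross v w)
    (hle : ((Finset.univ.offDiag).filter fun q : V × V => G.Adj q.1 q.2 ∧ cross q.1 q.2).card
      ≤ ((Finset.univ.offDiag).filter fun q : V × V => ¬ G.Adj q.1 q.2 ∧ cross q.1 q.2).card) :
    clusterCost G P' ≤ clusterCost G P := by
  classical
  set D := (Finset.univ.offDiag : Finset (V × V)) with hD
  set E := D.filter fun q : V × V => G.Adj q.1 q.2 ∧ ¬ sameCluster P q.1 q.2 with hE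
  set N := D.filter fun q : V × V => ¬ G.Adj q.1 q.2 ∧ sameCluster P q.1 q.2 with hN
  set Xe := D.filter fun q : V × V => G.Adj q.1 q.2 ∧ cross q.1 q.2 with hXe
  set Xn := D.filter fun q : V × V => ¬ G.Adj q.1 q.2 ∧ cross q.1 q.2 with hXn
  have hE' : D.filter (fun q : V × V => G.Adj q.1 q.2 ∧ ¬ sameCluster P' q.1 q.2) = E ∪ Xe := by
    ext q
    simp only [hE, hXe, Finset.mem_union, Finset.mem_filter]
    constructor
    · rintro ⟨hq, hadj, hns⟩
      rw [hsame] at hns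
      push_neg at hns
      by_cases h : sameCluster P q.1 q.2
      · exact Or.inr ⟨hq, hadj, hns h⟩
      · exact Or.inl ⟨hq, hadj, h⟩
    · rintro (⟨hq, hadj, hns⟩ | ⟨hq, hadj, hc⟩)
      · exact ⟨hq, hadj, fun h => hns ((hsame _ _).1 h).1⟩
      · exact ⟨hq, hadj, fun h => ((hsame _ _).1 h).2 hc⟩
  have hN' : D.filter (fun q : V × V => ¬ G.Adj q.1 q.2 ∧ sameCluster P' q.1 q.2) = N \ Xn := by
    ext q
    simp only [hN, hXn, Finset.mem_sdiff, Finset.mem_filter]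
    constructor
    · rintro ⟨hq, hadj, hs⟩
      rw [hsame] at hs
      exact ⟨⟨hq, hadj, hs.1⟩, fun h => hs.2 h.2.2⟩
    · rintro ⟨⟨hq, hadj, hs⟩, hn⟩
      exact ⟨hq, hadj, (hsame _ _).2 ⟨hs, fun hc => hn ⟨hq, hadj, hc⟩⟩⟩
  have hdisj : Disjoint E Xe := by
    rw [Finset.disjoint_left]
    rintro q hq hq'
    simp only [hE, hXe, Finset.mem_filter] at hq hq'
    exact hq.2.2 (hcs _ _ hq'.2.2)
  have hsub : Xn ⊆ N := by
    intro q hq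
    simp only [hN, hXn, Finset.mem_filter] at hq ⊢
    exact ⟨hq.1, hq.2.1, hcs _ _ hq.2.2⟩
  have cE : Even E.card := by
    rw [hE, hD]
    convert (even_card_symm_filter (fun v w => G.Adj v w ∧ ¬ sameCluster P v w) fun v w h => ⟨h.1.symm, fun hs => h.2 (sameCluster_symm hs)⟩) using 3
    all_goals exact Subsingleton.elim _ _
  have cN : Even N.card := by
    rw [hN, hD]
    convert (even_card_symm_filter (fun v w => ¬ G.Adj v w ∧ sameCluster P v w) fun v w h => ⟨fun ha => h.1 ha.symm, sameCluster_symm h.2⟩) using 3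
    all_goals exact Subsingleton.elim _ _
  have cXe : Even Xe.card := by
    rw [hXe, hD]
    convert (even_card_symm_filter (fun v w => G.Adj v w ∧ cross v w) fun v w h => ⟨h.1.symm, hsymm _ _ h.2⟩) using 3
    all_goals exact Subsingleton.elim _ _
  have cXn : Even Xn.card := by
    rw [hXn, hD]
    convert (even_card_symm_filter (fun v w => ¬ G.Adj v w ∧ cross v w) fun v w h => ⟨fun ha => h.1 ha.symm, hsymm _ _ h.2⟩) using 3
    all_goals exact Subsingleton.elim _ _
  have hcard1 : (D.filter fun q : V × V => G.Adj q.1 q.2 ∧ ¬ sameCluster P' q.1 q.2).card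
      = E.card + Xe.card := by rw [hE', Finset.card_union_of_disjoint hdisj]
  have hcard2 : (D.filter fun q : V × V => ¬ G.Adj q.1 q.2 ∧ sameCluster P' q.1 q.2).card
      = N.card - Xn.card := by rw [hN', Finset.card_sdiff_of_subset hsub]
  have hsubc : Xn.card ≤ N.card := Finset.card_le_card hsub
  unfold clusterCost
  rw [← hD, hcard1, hcard2, ← hE, ← hN]
  obtain ⟨e, he⟩ := cE; obtain ⟨n, hn⟩ := cN; obtain ⟨x, hx⟩ := cXe; obtain ⟨y, hy⟩ := cXn
  omega
end Cost

lemma cross_edges_le [Fintype V] (G : SimpleGraph V) (M : Finset V)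
    (hM : ∀ v w : V, G.Adj v w → v ∈ M ∨ w ∈ M) (k : ℕ) (hMk : M.card ≤ k)
    (t A : Finset V) (hA : A ⊆ t)
    (hab : 2 * k * t.card ≤ A.card * (t \ A).card) :
    ((Finset.univ.offDiag).filter fun q : V × V =>
        G.Adj q.1 q.2 ∧ ((q.1 ∈ A ∧ q.2 ∈ t \ A) ∨ (q.1 ∈ t \ A ∧ q.2 ∈ A))).card
      ≤ ((Finset.univ.offDiag).filter fun q : V × V =>
        ¬ G.Adj q.1 q.2 ∧ ((q.1 ∈ A ∧ q.2 ∈ t \ A) ∨ (q.1 ∈ t \ A ∧ q.2 ∈ A))).card := by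
  classical
  set B := t \ A with hB
  have hABdisj : Disjoint A B := Finset.disjoint_sdiff
  set cross : V × V → Prop := fun q => (q.1 ∈ A ∧ q.2 ∈ B) ∨ (q.1 ∈ B ∧ q.2 ∈ A) with hcross
  set X := (Finset.univ.offDiag).filter cross with hX
  have hXeq : X = A ×ˢ B ∪ B ×ˢ A := by
    ext ⟨v, w⟩
    simp only [hX, hcross, Finset.mem_filter, Finset.mem_offDiag, Finset.mem_union,
      Finset.mem_product, Finset.mem_univ, true_and]
    constructor
    · rintro ⟨-, h⟩; exact h
    · rintro (⟨hv, hw⟩ | ⟨hv, hw⟩)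
      · exact ⟨fun h => (Finset.disjoint_left.1 hABdisj) hv (h ▸ hw), Or.inl ⟨hv, hw⟩⟩
      · exact ⟨fun h => (Finset.disjoint_left.1 hABdisj) hw (h ▸ hv), Or.inr ⟨hv, hw⟩⟩
  have hXcard : X.card = A.card * B.card + B.card * A.card := by
    rw [hXeq, Finset.card_union_of_disjoint, Finset.card_product, Finset.card_product]
    rw [Finset.disjoint_left]
    rintro ⟨v, w⟩ hq hq'
    rw [Finset.mem_product] at hq hq'
    exact (Finset.disjoint_left.1 hABdisj) hq.1 hq'.1
  have hsplit : (X.filter fun q : V × V => G.Adj q.1 q.2).card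
      + (X.filter fun q : V × V => ¬ G.Adj q.1 q.2).card = X.card :=
    Finset.card_filter_add_card_filter_not _
  have he1 : (Finset.univ.offDiag).filter (fun q : V × V =>
        G.Adj q.1 q.2 ∧ ((q.1 ∈ A ∧ q.2 ∈ B) ∨ (q.1 ∈ B ∧ q.2 ∈ A)))
      = X.filter fun q : V × V => G.Adj q.1 q.2 := by
    rw [hX, Finset.filter_filter]
    apply Finset.filter_congr
    intro q _
    simp only [hcross]
    tauto
  have he2 : (Finset.univ.offDiag).filter (fun q : V × V =>
        ¬ G.Adj q.1 q.2 ∧ ((q.1 ∈ A ∧ q.2 ∈ B) ∨ (q.1 ∈ B ∧ q.2 ∈ A)))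
      = X.filter fun q : V × V => ¬ G.Adj q.1 q.2 := by
    rw [hX, Finset.filter_filter]
    apply Finset.filter_congr
    intro q _
    simp only [hcross]
    tauto
  have hbound : (X.filter fun q : V × V => G.Adj q.1 q.2).card ≤ 2 * k * t.card := by
    have hsubset : (X.filter fun q : V × V => G.Adj q.1 q.2)
        ⊆ ((M ∩ t) ×ˢ t) ∪ (t ×ˢ (M ∩ t)) := by
      rintro ⟨v, w⟩ hq
      simp only [hX, hcross, Finset.mem_filter] at hq
      obtain ⟨⟨-, hc⟩, hadj⟩ := hq
      have hvt : v ∈ t := by rcases hc with ⟨h, -⟩ | ⟨h, -⟩; exact hA h; exact (hB ▸ Finset.sdiff_subset) h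
      have hwt : w ∈ t := by rcases hc with ⟨-, h⟩ | ⟨-, h⟩; exact (hB ▸ Finset.sdiff_subset) h; exact hA h
      rcases hM v w hadj with hm | hm
      · exact Finset.mem_union_left _ (Finset.mem_product.2 ⟨Finset.mem_inter.2 ⟨hm, hvt⟩, hwt⟩)
      · exact Finset.mem_union_right _ (Finset.mem_product.2 ⟨hvt, Finset.mem_inter.2 ⟨hm, hwt⟩⟩)
    calc (X.filter fun q : V × V => G.Adj q.1 q.2).card
        ≤ (((M ∩ t) ×ˢ t) ∪ (t ×ˢ (M ∩ t))).card := Finset.card_le_card hsubset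
      _ ≤ ((M ∩ t) ×ˢ t).card + (t ×ˢ (M ∩ t)).card := Finset.card_union_le _ _
      _ = (M ∩ t).card * t.card + t.card * (M ∩ t).card := by
          rw [Finset.card_product, Finset.card_product]
      _ ≤ k * t.card + t.card * k := by
          have : (M ∩ t).card ≤ k := le_trans (Finset.card_le_card Finset.inter_subset_left) hMk
          exact Nat.add_le_add (Nat.mul_le_mul_right _ this) (Nat.mul_le_mul_left _ this)
      _ = 2 * k * t.card := by ring
  rw [he1, he2]
  have hcomm : B.card * A.card = A.card * B.card := Nat.mul_comm _ _
  have hfin : (X.filter fun q : V × V => G.Adj q.1 q.2).card ≤ A.card * B.card :=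
    le_trans hbound hab
  omega

lemma exists_fair_split_s13 {κ : ℕ} (χ : V → Fin κ) (c : Fin κ → ℕ) (t : Finset V) (d : ℕ)
    (hfair : ∀ i, (t.filter fun v => χ v = i).card = d * c i) :
    ∃ A ⊆ t, (∀ i, (A.filter fun v => χ v = i).card = (d / 2) * c i) ∧
      (∀ i, ((t \ A).filter fun v => χ v = i).card = (d - d / 2) * c i) ∧
      A.card = (d / 2) * (∑ i, c i) ∧ (t \ A).card = (d - d / 2) * (∑ i, c i) := by
  classical
  have hle : ∀ i : Fin κ, (d / 2) * c i ≤ (t.filter fun v => χ v = i).card := by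
    intro i; rw [hfair i]; exact Nat.mul_le_mul_right _ (Nat.div_le_self _ _)
  choose Ai hAi hAicard using fun i => Finset.exists_subset_card_eq (hle i)
  set A := Finset.univ.biUnion Ai with hA
  have hAt : A ⊆ t := by
    intro v hv
    rw [hA, Finset.mem_biUnion] at hv
    obtain ⟨i, -, hv⟩ := hv
    exact (Finset.filter_subset _ t) (hAi i hv)
  have hfib : ∀ j, A.filter (fun v => χ v = j) = Ai j := by
    intro j
    ext v
    simp only [hA, Finset.mem_filter, Finset.mem_biUnion, Finset.mem_univ, true_and]
    constructor
    · rintro ⟨⟨i, hv⟩, hχ⟩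
      have hvi : χ v = i := (Finset.mem_filter.1 (hAi i hv)).2
      have hij : i = j := by rw [hvi] at hχ; exact hχ
      exact hij ▸ hv
    · intro hv
      exact ⟨⟨j, hv⟩, (Finset.mem_filter.1 (hAi j hv)).2⟩
  have hAcard : ∀ j, (A.filter fun v => χ v = j).card = (d / 2) * c j := by
    intro j; rw [hfib j, hAicard j]
  have hBfib : ∀ j, ((t \ A).filter fun v => χ v = j).card = (d - d / 2) * c j := by
    intro j
    have heq : (t \ A).filter (fun v => χ v = j)
        = t.filter (fun v => χ v = j) \ A.filter (fun v => χ v = j) := by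
      ext v
      simp only [Finset.mem_sdiff, Finset.mem_filter]
      tauto
    rw [heq, Finset.card_sdiff_of_subset (Finset.filter_subset_filter _ hAt), hfair j, hAcard j,
      ← Nat.sub_mul]
  have hsum : ∀ (s : Finset V), s.card = ∑ j : Fin κ, (s.filter fun v => χ v = j).card := by
    intro s
    exact Finset.card_eq_sum_card_fiberwise (fun v _ => Finset.mem_univ (χ v))
  refine ⟨A, hAt, hAcard, hBfib, ?_, ?_⟩
  · rw [hsum A]; simp_rw [hAcard]; rw [← Finset.mul_sum]
  · rw [hsum (t \ A)]; simp_rw [hBfib]; rw [← Finset.mul_sum]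

lemma descent [Fintype V] {κ : ℕ} (G : SimpleGraph V) (k : ℕ) (M : Finset V)
    (hM : ∀ v w : V, G.Adj v w → v ∈ M ∨ w ∈ M) (hMk : M.card ≤ k)
    (χ : V → Fin κ) (c : Fin κ → ℕ) (hc : c ≠ 0) :
    ∀ Q : Finpartition (Finset.univ : Finset V), IsFairClustering χ c Q →
      ∃ P : Finpartition (Finset.univ : Finset V), IsFairClustering χ c P ∧
        clusterCost G P ≤ clusterCost G Q ∧
        ∀ t ∈ P.parts, t.card ≤ max (24 * k) (∑ i, c i) := by
  classical
  have hc1 : 1 ≤ ∑ i, c i := by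
    obtain ⟨i, hi⟩ := Function.ne_iff.1 hc
    have h1 : 0 < c i := Nat.pos_of_ne_zero (by simpa using hi)
    have h2 := Finset.single_le_sum (f := c) (fun _ _ => Nat.zero_le _) (Finset.mem_univ i)
    omega
  suffices H : ∀ m : ℕ, ∀ Q : Finpartition (Finset.univ : Finset V),
      (∑ s ∈ Q.parts, s.card * s.card) = m → IsFairClustering χ c Q →
      ∃ P : Finpartition (Finset.univ : Finset V), IsFairClustering χ c P ∧
        clusterCost G P ≤ clusterCost G Q ∧
        ∀ t ∈ P.parts, t.card ≤ max (24 * k) (∑ i, c i) by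
    exact fun Q hQ => H _ Q rfl hQ
  intro m
  induction m using Nat.strong_induction_on with
  | _ m ih =>
  intro Q hm hQ
  by_cases hsmall : ∀ t ∈ Q.parts, t.card ≤ max (24 * k) (∑ i, c i)
  · exact ⟨Q, hQ, le_refl _, hsmall⟩
  push_neg at hsmall
  obtain ⟨t, ht, htbig⟩ := hsmall
  have h24 : 24 * k < t.card := lt_of_le_of_lt (le_max_left _ _) htbig
  have hS : (∑ i, c i) < t.card := lt_of_le_of_lt (le_max_right _ _) htbig
  obtain ⟨d, hd⟩ := hQ t ht
  have htcard : t.card = d * (∑ i, c i) := by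
    rw [Finset.card_eq_sum_card_fiberwise (f := χ) (fun v _ => Finset.mem_univ (χ v))]
    simp_rw [hd]
    rw [← Finset.mul_sum]
  have hd2 : 2 ≤ d := by
    by_contra hcon
    push_neg at hcon
    have : t.card ≤ ∑ i, c i := by
      rw [htcard]
      calc d * (∑ i, c i) ≤ 1 * (∑ i, c i) := Nat.mul_le_mul_right _ (by omega)
      _ = ∑ i, c i := one_mul _
    omega
  obtain ⟨A, hAt, hAfib, hBfib, hAcard, hBcard⟩ := exists_fair_split_s13 χ c t d hd
  have hq1 : 1 ≤ d / 2 := by omega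
  have hr1 : 1 ≤ d - d / 2 := by omega
  have hA0 : A.Nonempty := by
    rw [← Finset.card_pos, hAcard]
    exact Nat.mul_pos hq1 hc1
  have hB0 : (t \ A).Nonempty := by
    rw [← Finset.card_pos, hBcard]
    exact Nat.mul_pos hr1 hc1
  set P' := splitPart Q t A ht hAt hA0 hB0 with hP'
  have hfair' : IsFairClustering χ c P' := by
    intro s hs
    rw [hP', splitPart_parts] at hs
    simp only [Finset.mem_insert] at hs
    rcases hs with rfl | rfl | hs
    · exact ⟨d / 2, hAfib⟩
    · exact ⟨d - d / 2, hBfib⟩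
    · exact hQ s (Finset.mem_of_mem_erase hs)
  -- the crossing inequality
  have hab : 2 * k * t.card ≤ A.card * (t \ A).card := by
    set S := ∑ i, c i with hSdef
    set q := d / 2 with hqdef
    set r := d - d / 2 with hrdef
    have h3q : d ≤ 3 * q := by omega
    have h3r : d ≤ 3 * r := by omega
    have h9 : t.card * t.card ≤ 9 * (A.card * (t \ A).card) := by
      rw [htcard, hAcard, hBcard]
      calc d * S * (d * S) ≤ (3 * q) * S * ((3 * r) * S) :=
        Nat.mul_le_mul (Nat.mul_le_mul_right _ h3q) (Nat.mul_le_mul_right _ h3r)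
      _ = 9 * (q * S * (r * S)) := by ring
    have h18 : 18 * k ≤ t.card := by omega
    have h18n : 9 * (2 * k * t.card) ≤ t.card * t.card := by
      have := Nat.mul_le_mul_right t.card h18
      calc 9 * (2 * k * t.card) = 18 * k * t.card := by ring
      _ ≤ t.card * t.card := this
    have : 9 * (2 * k * t.card) ≤ 9 * (A.card * (t \ A).card) := le_trans h18n h9
    omega
  have hcost : clusterCost G P' ≤ clusterCost G Q := by
    refine clusterCost_le_of_split Q P' G
      (fun v w => (v ∈ A ∧ w ∈ t \ A) ∨ (v ∈ t \ A ∧ w ∈ A)) ?_ ?_ ?_ ?_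
    · intro v w h; tauto
    · rintro v w (⟨hv, hw⟩ | ⟨hv, hw⟩)
      · exact ⟨t, ht, hAt hv, Finset.sdiff_subset hw⟩
      · exact ⟨t, ht, Finset.sdiff_subset hv, hAt hw⟩
    · intro v w
      exact sameCluster_splitPart Q t A ht hAt hA0 hB0 v w
    · have h := cross_edges_le G M hM k hMk t A hAt hab
      convert h using 3
      all_goals first | rfl | exact Subsingleton.elim _ _
  -- the measure decreases
  have hAB : Disjoint A (t \ A) := Finset.disjoint_sdiff
  have hAneB : A ≠ t \ A := by
    intro h
    obtain ⟨a, ha⟩ := hA0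
    exact (Finset.disjoint_left.1 hAB) ha (h ▸ ha)
  have hnotin : ∀ s : Finset V, s.Nonempty → s ⊆ t → s ∉ Q.parts.erase t := by
    intro s hs0 hst hmem
    have hdisj : Disjoint t s := Q.disjoint ht (Finset.mem_of_mem_erase hmem)
      (Ne.symm (Finset.ne_of_mem_erase hmem))
    obtain ⟨a, ha⟩ := hs0
    exact (Finset.disjoint_left.1 hdisj) (hst ha) ha
  have hmeas : (∑ s ∈ P'.parts, s.card * s.card) < m := by
    have hparts : P'.parts = insert A (insert (t \ A) (Q.parts.erase t)) := splitPart_parts ..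
    have hAnotin : A ∉ insert (t \ A) (Q.parts.erase t) := by
      simp only [Finset.mem_insert]
      push_neg
      exact ⟨hAneB, hnotin A hA0 hAt⟩
    have hBnotin : t \ A ∉ Q.parts.erase t := hnotin _ hB0 Finset.sdiff_subset
    have hm' : m = t.card * t.card + ∑ s ∈ Q.parts.erase t, s.card * s.card := by
      rw [← hm]
      conv_lhs => rw [← Finset.insert_erase ht]
      rw [Finset.sum_insert (Finset.notMem_erase _ _)]
    rw [hparts, Finset.sum_insert hAnotin, Finset.sum_insert hBnotin, hm']
    have hsum : A.card + (t \ A).card = t.card := by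
      rw [Nat.add_comm]
      exact Finset.card_sdiff_add_card_eq_card hAt
    have ha1 : 1 ≤ A.card := Finset.card_pos.2 hA0
    have hb1 : 1 ≤ (t \ A).card := Finset.card_pos.2 hB0
    have : A.card * A.card + (t \ A).card * (t \ A).card < t.card * t.card := by
      nlinarith
    omega
  obtain ⟨P, hP1, hP2, hP3⟩ := ih _ hmeas P' rfl hfair'
  exact ⟨P, hP1, le_trans hP2 hcost, hP3⟩

/-- If `G` has a vertex cover `M` of size at most `k` and admits a fair
clustering, then `G` admits a minimum-cost fair clustering in which every cluster has size at
most `max (24 * k) c̃`, where `c̃ = ∑ i, c i` is the fairlet size. -/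
theorem exists_min_cost_fair_clustering_small_clusters_of_vertexCover
    {V : Type*} [Fintype V] {κ : ℕ} (G : SimpleGraph V) (k : ℕ)
    (M : Finset V) (hM : ∀ v w : V, G.Adj v w → v ∈ M ∨ w ∈ M) (hMk : M.card ≤ k)
    (χ : V → Fin κ) (c : Fin κ → ℕ) (hc : c ≠ 0)
    (hex : ∃ Q : Finpartition (Finset.univ : Finset V), IsFairClustering χ c Q) :
    ∃ P : Finpartition (Finset.univ : Finset V),
      IsFairClustering χ c P ∧
      (∀ Q : Finpartition (Finset.univ : Finset V),
        IsFairClustering χ c Q → clusterCost G P ≤ clusterCost G Q) ∧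
      ∀ t ∈ P.parts, t.card ≤ max (24 * k) (∑ i, c i) := by
  classical
  obtain ⟨Q0, hQ0⟩ := hex
  obtain ⟨P0, hP0f, hP0c, hP0s⟩ := descent G k M hM hMk χ c hc Q0 hQ0
  have hexists : ∃ n : ℕ, ∃ P : Finpartition (Finset.univ : Finset V),
      (IsFairClustering χ c P ∧ ∀ t ∈ P.parts, t.card ≤ max (24 * k) (∑ i, c i)) ∧
      clusterCost G P = n := ⟨_, P0, ⟨hP0f, hP0s⟩, rfl⟩
  obtain ⟨P, ⟨hPf, hPs⟩, hPc⟩ := Nat.find_spec hexists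
  refine ⟨P, hPf, ?_, hPs⟩
  intro Q hQ
  obtain ⟨P1, h1f, h1c, h1s⟩ := descent G k M hM hMk χ c hc Q hQ
  have hle : Nat.find hexists ≤ clusterCost G P1 := Nat.find_le ⟨P1, ⟨h1f, h1s⟩, rfl⟩
  rw [hPc]
  exact le_trans hle h1c

end
end
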